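/- arXiv:2107.06593 — 6 statements merged into one kernel-verified Lean document; each statement's English description precedes it below -/
import Mathlib

section
/- The perturbed Epstein–Zin operator preserves order classes: Let θ > 0 with θ ≠ 1 and ρ = (θ-1)/θ. Let ε ≥ 0, Λ ∈ L̂^θ_{++} and U ∈ 𝕆(Λ). Then for every W ∈ 𝕆(Λ^θ), the process F^ε_{U,Λ}(W) again belongs to 𝕆(Λ^θ); that is, there exist constants 0 < k' ≤ K' < ∞ with k' Λ^θ ≤ F^ε_{U,Λ}(W) ≤ K' Λ^θ. -/
open MeasureTheory Filter Set

noncomputable section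

namespace EZSDU

variable {Ω : Type*} {m : MeasurableSpace Ω}

/-- `U ∈ 𝕆(Y)`: `U` is a nonnegative progressively measurable process with
`kY ≤ U ≤ KY` for some constants `0 < k ≤ K < ∞`. -/
def InOrder (P : Measure Ω) (ℱ : Filtration ℝ m) (Y U : ℝ → Ω → ℝ) : Prop :=
  ProgMeasurable ℱ U ∧ (∀ t ω, 0 ≤ t → 0 ≤ U t ω) ∧
  ∃ k K : ℝ, 0 < k ∧ k ≤ K ∧
    ∀ t : ℝ, 0 ≤ t → ∀ᵐ ω ∂P, k * Y t ω ≤ U t ω ∧ U t ω ≤ K * Y t ω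

/-- `Λ ∈ L^θ_{++}`: a strictly positive progressively measurable process with
`E[∫₀^∞ Λ_s^θ ds] < ∞`. -/
def MemLtheta (P : Measure Ω) (ℱ : Filtration ℝ m) (θ : ℝ) (Λ : ℝ → Ω → ℝ) : Prop :=
  ProgMeasurable ℱ Λ ∧ (∀ t ω, 0 < Λ t ω) ∧
  (∫⁻ ω, (∫⁻ s in Set.Ioi (0:ℝ), ENNReal.ofReal (Λ s ω ^ θ)) ∂P) < ⊤

/-- The process `I^Λ_t = E[∫_t^∞ Λ_s^θ ds | 𝓕_t]`. -/
def Iproc (P : Measure Ω) (ℱ : Filtration ℝ m) (θ : ℝ) (Λ : ℝ → Ω → ℝ) : ℝ → Ω → ℝ :=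
  fun t => P[(fun ω => ∫ s in Set.Ioi t, Λ s ω ^ θ) | ℱ t]

/-- `Λ ∈ L̂^θ_{++}`: `Λ ∈ L^θ_{++}` and `Λ^θ ∈ 𝕆(I^Λ)`. -/
def MemLthetaHat (P : Measure Ω) (ℱ : Filtration ℝ m) (θ : ℝ) (Λ : ℝ → Ω → ℝ) : Prop :=
  MemLtheta P ℱ θ Λ ∧ InOrder P ℱ (Iproc P ℱ θ Λ) fun t ω => Λ t ω ^ θ

/-- The perturbed operator `F^ε_{U,Λ}(W)_t = E[∫_t^∞ (U_s W_s^ρ + ε Λ_s^θ) ds | 𝓕_t]`. -/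
def Fop (P : Measure Ω) (ℱ : Filtration ℝ m) (θ ρ ε : ℝ)
    (U Λ W : ℝ → Ω → ℝ) : ℝ → Ω → ℝ :=
  fun t => P[(fun ω => ∫ s in Set.Ioi t, (U s ω * W s ω ^ ρ + ε * Λ s ω ^ θ)) | ℱ t]

lemma measurable_rpow_const (y : ℝ) : Measurable fun x : ℝ => x ^ y :=
  measurable_of_continuousOn_compl_singleton 0 fun x hx =>
    (Real.continuousAt_rpow_const x y (Or.inl hx)).continuousWithinAt

lemma jointSM {ℱ : Filtration ℝ m} {u : ℝ → Ω → ℝ} (hu : ProgMeasurable ℱ u) :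
    StronglyMeasurable fun p : ℝ × Ω => u p.1 p.2 := by
  have h : ∀ n : ℕ, StronglyMeasurable fun p : ℝ × Ω => u (min p.1 n) p.2 := by
    intro n
    have h1 : StronglyMeasurable[Subtype.instMeasurableSpace.prod (ℱ n)]
        fun q : Set.Iic (n : ℝ) × Ω => u q.1 q.2 := hu n
    have h2 : @Measurable (ℝ × Ω) (Set.Iic (n : ℝ) × Ω) _
        (Subtype.instMeasurableSpace.prod (ℱ n))
        (fun p : ℝ × Ω => ((⟨min p.1 n, Set.mem_Iic.mpr (min_le_right _ _)⟩ :
          Set.Iic (n : ℝ)), p.2)) := by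
      exact Measurable.prodMk ((measurable_fst.min measurable_const).subtype_mk)
        (measurable_snd.mono le_rfl (ℱ.le n))
    exact h1.comp_measurable h2
  refine stronglyMeasurable_of_tendsto atTop h (tendsto_pi_nhds.mpr fun p => ?_)
  have hev : ∀ᶠ n : ℕ in atTop, u (min p.1 n) p.2 = u p.1 p.2 := by
    filter_upwards [eventually_ge_atTop ⌈p.1⌉₊] with n hn
    rw [min_eq_left ((Nat.le_ceil p.1).trans (Nat.cast_le.mpr hn))]
  exact Tendsto.congr' (by filter_upwards [hev] with n hn using hn.symm) tendsto_const_nhds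

lemma aux_bound {θ ρ ε kU KU kW KW x u w : ℝ} (hθ : 0 < θ) (hρ : ρ = (θ - 1) / θ)
    (hε : 0 ≤ ε) (hx : 0 < x) (hkU : 0 < kU) (hkW : 0 < kW)
    (hu1 : kU * x ≤ u) (hu2 : u ≤ KU * x)
    (hw1 : kW * x ^ θ ≤ w) (hw2 : w ≤ KW * x ^ θ) :
    kU * min (kW ^ ρ) (KW ^ ρ) * x ^ θ ≤ u * w ^ ρ + ε * x ^ θ ∧
      u * w ^ ρ + ε * x ^ θ ≤ (KU * max (kW ^ ρ) (KW ^ ρ) + ε) * x ^ θ := by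
  have hX : 0 < x ^ θ := Real.rpow_pos_of_pos hx θ
  have hw : 0 < w := lt_of_lt_of_le (mul_pos hkW hX) hw1
  have hKW : 0 < KW := by nlinarith
  have hKU : 0 < KU := by nlinarith
  have hu0 : 0 < u := lt_of_lt_of_le (mul_pos hkU hx) hu1
  have hθρ : θ * ρ = θ - 1 := by rw [hρ]; field_simp
  have hXρ : 0 < x ^ (θ * ρ) := Real.rpow_pos_of_pos hx _
  have hmulX : x * x ^ (θ * ρ) = x ^ θ := by
    rw [hθρ]
    nth_rewrite 1 [← Real.rpow_one x]
    rw [← Real.rpow_add hx]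
    ring_nf
  have hXid : (x ^ θ) ^ ρ = x ^ (θ * ρ) := (Real.rpow_mul hx.le θ ρ).symm
  have hwlo : min (kW ^ ρ) (KW ^ ρ) * x ^ (θ * ρ) ≤ w ^ ρ := by
    rcases le_or_gt 0 ρ with hρ0 | hρ0
    · calc min (kW ^ ρ) (KW ^ ρ) * x ^ (θ * ρ) ≤ kW ^ ρ * (x ^ θ) ^ ρ := by
            rw [hXid]; exact mul_le_mul_of_nonneg_right (min_le_left _ _) hXρ.le
        _ = (kW * x ^ θ) ^ ρ := (Real.mul_rpow hkW.le hX.le).symm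
        _ ≤ w ^ ρ := Real.rpow_le_rpow (by positivity) hw1 hρ0
    · calc min (kW ^ ρ) (KW ^ ρ) * x ^ (θ * ρ) ≤ KW ^ ρ * (x ^ θ) ^ ρ := by
            rw [hXid]; exact mul_le_mul_of_nonneg_right (min_le_right _ _) hXρ.le
        _ = (KW * x ^ θ) ^ ρ := (Real.mul_rpow hKW.le hX.le).symm
        _ ≤ w ^ ρ := Real.rpow_le_rpow_of_nonpos hw hw2 hρ0.le
  have hwhi : w ^ ρ ≤ max (kW ^ ρ) (KW ^ ρ) * x ^ (θ * ρ) := by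
    rcases le_or_gt 0 ρ with hρ0 | hρ0
    · calc w ^ ρ ≤ (KW * x ^ θ) ^ ρ := Real.rpow_le_rpow hw.le hw2 hρ0
        _ = KW ^ ρ * (x ^ θ) ^ ρ := Real.mul_rpow hKW.le hX.le
        _ ≤ max (kW ^ ρ) (KW ^ ρ) * x ^ (θ * ρ) := by
            rw [hXid]; exact mul_le_mul_of_nonneg_right (le_max_right _ _) hXρ.le
    · calc w ^ ρ ≤ (kW * x ^ θ) ^ ρ :=
            Real.rpow_le_rpow_of_nonpos (mul_pos hkW hX) hw1 hρ0.le
        _ = kW ^ ρ * (x ^ θ) ^ ρ := Real.mul_rpow hkW.le hX.le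
        _ ≤ max (kW ^ ρ) (KW ^ ρ) * x ^ (θ * ρ) := by
            rw [hXid]; exact mul_le_mul_of_nonneg_right (le_max_left _ _) hXρ.le
  have hwρ0 : 0 < w ^ ρ := Real.rpow_pos_of_pos hw ρ
  have hmin0 : 0 < min (kW ^ ρ) (KW ^ ρ) :=
    lt_min (Real.rpow_pos_of_pos hkW ρ) (Real.rpow_pos_of_pos hKW ρ)
  constructor
  · have h1 : (kU * x) * (min (kW ^ ρ) (KW ^ ρ) * x ^ (θ * ρ)) ≤ u * w ^ ρ :=
      mul_le_mul hu1 hwlo (by positivity) hu0.le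
    have heq : (kU * x) * (min (kW ^ ρ) (KW ^ ρ) * x ^ (θ * ρ))
        = kU * min (kW ^ ρ) (KW ^ ρ) * x ^ θ := by
      rw [← hmulX]; ring
    nlinarith
  · have h1 : u * w ^ ρ ≤ (KU * x) * (max (kW ^ ρ) (KW ^ ρ) * x ^ (θ * ρ)) :=
      mul_le_mul hu2 hwhi hwρ0.le (by positivity)
    have heq : (KU * x) * (max (kW ^ ρ) (KW ^ ρ) * x ^ (θ * ρ))
        = KU * max (kW ^ ρ) (KW ^ ρ) * x ^ θ := by
      rw [← hmulX]; ring
    nlinarith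

/-- **The perturbed Epstein–Zin operator preserves order classes.** For `θ > 0`, `θ ≠ 1`,
`ρ = (θ-1)/θ`, `ε ≥ 0`, `Λ ∈ L̂^θ_{++}` and `U ∈ 𝕆(Λ)`, the operator `F^ε_{U,Λ}` maps
`𝕆(Λ^θ)` to itself. -/
theorem Fop_maps_order_class_to_itself
    (P : Measure Ω) [IsProbabilityMeasure P] (ℱ : Filtration ℝ m)
    (θ ρ ε : ℝ) (hθ : 0 < θ) (hθ1 : θ ≠ 1) (hρ : ρ = (θ - 1) / θ) (hε : 0 ≤ ε)
    (Λ : ℝ → Ω → ℝ) (hΛ : MemLthetaHat P ℱ θ Λ)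
    (U : ℝ → Ω → ℝ) (hU : InOrder P ℱ Λ U)
    (W : ℝ → Ω → ℝ) (hW : InOrder P ℱ (fun t ω => Λ t ω ^ θ) W) :
    ∃ k' K' : ℝ, 0 < k' ∧ k' ≤ K' ∧
      ∀ t : ℝ, 0 ≤ t → ∀ᵐ ω ∂P,
        k' * Λ t ω ^ θ ≤ Fop P ℱ θ ρ ε U Λ W t ω ∧
        Fop P ℱ θ ρ ε U Λ W t ω ≤ K' * Λ t ω ^ θ := by
  obtain ⟨⟨hΛprog, hΛpos, hΛint⟩, hIord⟩ := hΛ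
  obtain ⟨-, -, kI, KI, hkI, hkKI, hIbd⟩ := hIord
  obtain ⟨hUprog, hUnn, kU, KU, hkU, hkKU, hUbd⟩ := hU
  obtain ⟨hWprog, hWnn, kW, KW, hkW, hkKW, hWbd⟩ := hW
  have hKI : 0 < KI := lt_of_lt_of_le hkI hkKI
  -- constants
  set aW : ℝ := min (kW ^ ρ) (KW ^ ρ) with haWdef
  set bW : ℝ := max (kW ^ ρ) (KW ^ ρ) with hbWdef
  have hKW : 0 < KW := lt_of_lt_of_le hkW hkKW
  have haW : 0 < aW := lt_min (Real.rpow_pos_of_pos hkW ρ) (Real.rpow_pos_of_pos hKW ρ)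
  set c₀ : ℝ := kU * aW with hc₀def
  set C₀ : ℝ := KU * bW + ε with hC₀def
  have hc₀ : 0 < c₀ := mul_pos hkU haW
  have hc₀C₀ : c₀ ≤ C₀ := by
    have : kU * aW ≤ KU * bW :=
      mul_le_mul hkKU (min_le_max) haW.le (lt_of_lt_of_le hkU hkKU).le
    simp only [hc₀def, hC₀def]; linarith
  have hC₀ : 0 < C₀ := lt_of_lt_of_le hc₀ hc₀C₀
  -- joint measurability
  have hΛj : Measurable fun p : ℝ × Ω => Λ p.1 p.2 := (jointSM hΛprog).measurable
  have hUj : Measurable fun p : ℝ × Ω => U p.1 p.2 := (jointSM hUprog).measurable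
  have hWj : Measurable fun p : ℝ × Ω => W p.1 p.2 := (jointSM hWprog).measurable
  have hΛθj : Measurable fun p : ℝ × Ω => Λ p.1 p.2 ^ θ := (measurable_rpow_const θ).comp hΛj
  set Ψ : ℝ × Ω → ℝ := fun p => U p.1 p.2 * W p.1 p.2 ^ ρ + ε * Λ p.1 p.2 ^ θ with hΨdef
  have hΨj : Measurable Ψ := ((hUj.mul ((measurable_rpow_const ρ).comp hWj)).add (hΛθj.const_mul ε))
  -- pointwise band, per time s
  have hband : ∀ s : ℝ, 0 ≤ s → ∀ᵐ ω ∂P,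
      c₀ * Λ s ω ^ θ ≤ Ψ (s, ω) ∧ Ψ (s, ω) ≤ C₀ * Λ s ω ^ θ := by
    intro s hs
    filter_upwards [hUbd s hs, hWbd s hs] with ω hUω hWω
    exact aux_bound hθ hρ hε (hΛpos s ω) hkU hkW hUω.1 hUω.2 hWω.1 hWω.2
  -- Fubini swap of the a.e. quantifiers
  have hmeasband : MeasurableSet {p : ℝ × Ω |
      c₀ * Λ p.1 p.2 ^ θ ≤ Ψ p ∧ Ψ p ≤ C₀ * Λ p.1 p.2 ^ θ} := by
    rw [Set.setOf_and]
    exact (measurableSet_le (hΛθj.const_mul c₀) hΨj).inter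
      (measurableSet_le hΨj (hΛθj.const_mul C₀))
  have hbandswap : ∀ᵐ ω ∂P, ∀ᵐ s ∂(volume.restrict (Set.Ioi (0:ℝ))),
      c₀ * Λ s ω ^ θ ≤ Ψ (s, ω) ∧ Ψ (s, ω) ≤ C₀ * Λ s ω ^ θ := by
    refine (Measure.ae_ae_comm hmeasband).mp ?_
    refine (ae_restrict_iff' measurableSet_Ioi).mpr (ae_of_all _ fun s hs => ?_)
    exact hband s (le_of_lt hs)
  -- a.e. finiteness of the Λ^θ integral
  have hswapmeas : Measurable fun q : Ω × ℝ => ENNReal.ofReal (Λ q.2 q.1 ^ θ) :=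
    (hΛθj.comp measurable_swap).ennreal_ofReal
  have hfinmeas : Measurable fun ω => ∫⁻ s in Set.Ioi (0:ℝ), ENNReal.ofReal (Λ s ω ^ θ) :=
    Measurable.lintegral_prod_right' (f := fun q : Ω × ℝ => ENNReal.ofReal (Λ q.2 q.1 ^ θ))
      hswapmeas
  have hfin : ∀ᵐ ω ∂P, (∫⁻ s in Set.Ioi (0:ℝ), ENNReal.ofReal (Λ s ω ^ θ)) < ⊤ :=
    ae_lt_top hfinmeas hΛint.ne
  -- main per-time argument
  refine ⟨c₀ / KI, C₀ / kI, div_pos hc₀ hKI, ?_, ?_⟩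
  · rw [div_le_div_iff₀ hKI hkI]
    nlinarith
  intro t ht
  have hsub : Set.Ioi t ⊆ Set.Ioi (0:ℝ) := Set.Ioi_subset_Ioi ht
  set h : Ω → ℝ := fun ω => ∫ s in Set.Ioi t, Λ s ω ^ θ with hhdef
  set g : Ω → ℝ := fun ω => ∫ s in Set.Ioi t, Ψ (s, ω) with hgdef
  have hsliceΛ : ∀ ω, Measurable fun s => Λ s ω ^ θ := fun ω =>
    hΛθj.comp (measurable_id.prodMk measurable_const)
  have hsliceΨ : ∀ ω, Measurable fun s => Ψ (s, ω) := fun ω =>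
    hΨj.comp (measurable_id.prodMk measurable_const)
  have hΛθnn : ∀ s ω, 0 ≤ Λ s ω ^ θ := fun s ω => (Real.rpow_pos_of_pos (hΛpos s ω) θ).le
  -- a.e. facts
  have hae : ∀ᵐ ω ∂P,
      IntegrableOn (fun s => Λ s ω ^ θ) (Set.Ioi t) volume ∧
      IntegrableOn (fun s => Ψ (s, ω)) (Set.Ioi t) volume ∧
      c₀ * h ω ≤ g ω ∧ g ω ≤ C₀ * h ω := by
    filter_upwards [hbandswap, hfin] with ω hb hf
    have hb' : ∀ᵐ s ∂(volume.restrict (Set.Ioi t)),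
        c₀ * Λ s ω ^ θ ≤ Ψ (s, ω) ∧ Ψ (s, ω) ≤ C₀ * Λ s ω ^ θ :=
      ae_restrict_of_ae_restrict_of_subset hsub hb
    have hIntΛ : IntegrableOn (fun s => Λ s ω ^ θ) (Set.Ioi t) volume := by
      refine ⟨(hsliceΛ ω).aestronglyMeasurable, ?_⟩
      rw [hasFiniteIntegral_iff_ofReal (ae_of_all _ fun s => hΛθnn s ω)]
      exact lt_of_le_of_lt (lintegral_mono_set hsub) hf
    have hIntΨ : IntegrableOn (fun s => Ψ (s, ω)) (Set.Ioi t) volume := by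
      refine Integrable.mono' (hIntΛ.const_mul C₀) (hsliceΨ ω).aestronglyMeasurable ?_
      filter_upwards [hb'] with s hs
      rw [Real.norm_eq_abs, abs_le]
      constructor
      · have h0 : 0 ≤ c₀ * Λ s ω ^ θ := mul_nonneg hc₀.le (hΛθnn s ω)
        have h1 : 0 ≤ C₀ * Λ s ω ^ θ := mul_nonneg hC₀.le (hΛθnn s ω)
        linarith [hs.1]
      · exact hs.2
    refine ⟨hIntΛ, hIntΨ, ?_, ?_⟩
    · have := integral_mono_ae ((hIntΛ.const_mul c₀)) hIntΨ
        (by filter_upwards [hb'] with s hs using hs.1)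
      rwa [MeasureTheory.integral_const_mul] at this
    · have := integral_mono_ae hIntΨ ((hIntΛ.const_mul C₀))
        (by filter_upwards [hb'] with s hs using hs.2)
      rwa [MeasureTheory.integral_const_mul] at this
  have hhnn : ∀ ω, 0 ≤ h ω := fun ω => integral_nonneg fun s => hΛθnn s ω
  -- integrability of h over Ω
  have hsm_h : StronglyMeasurable h := by
    have : StronglyMeasurable fun q : Ω × ℝ => Λ q.2 q.1 ^ θ :=
      (hΛθj.comp measurable_swap).stronglyMeasurable
    exact this.integral_prod_right'
  have hsm_g : StronglyMeasurable g := by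
    have : StronglyMeasurable fun q : Ω × ℝ => Ψ (q.2, q.1) :=
      (hΨj.comp measurable_swap).stronglyMeasurable
    exact this.integral_prod_right'
  have hInt_h : Integrable h P := by
    refine ⟨hsm_h.aestronglyMeasurable, ?_⟩
    rw [hasFiniteIntegral_iff_ofReal (ae_of_all _ hhnn)]
    have hcong : ∀ᵐ ω ∂P, ENNReal.ofReal (h ω)
        = ∫⁻ s in Set.Ioi t, ENNReal.ofReal (Λ s ω ^ θ) := by
      filter_upwards [hae] with ω hω
      exact ofReal_integral_eq_lintegral_ofReal hω.1 (ae_of_all _ fun s => hΛθnn s ω)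
    calc ∫⁻ ω, ENNReal.ofReal (h ω) ∂P
        = ∫⁻ ω, (∫⁻ s in Set.Ioi t, ENNReal.ofReal (Λ s ω ^ θ)) ∂P := lintegral_congr_ae hcong
      _ ≤ ∫⁻ ω, (∫⁻ s in Set.Ioi (0:ℝ), ENNReal.ofReal (Λ s ω ^ θ)) ∂P :=
          lintegral_mono fun ω => lintegral_mono_set hsub
      _ < ⊤ := hΛint
  have hInt_g : Integrable g P := by
    refine Integrable.mono' (hInt_h.const_mul C₀) hsm_g.aestronglyMeasurable ?_
    filter_upwards [hae] with ω hω
    rw [Real.norm_eq_abs, abs_le]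
    have h0 : 0 ≤ c₀ * h ω := mul_nonneg hc₀.le (hhnn ω)
    have h1 : 0 ≤ C₀ * h ω := mul_nonneg hC₀.le (hhnn ω)
    exact ⟨by linarith [hω.2.2.1], hω.2.2.2⟩
  -- conditional expectation comparison
  have hglo : (fun ω => c₀ * h ω) ≤ᵐ[P] g := by
    filter_upwards [hae] with ω hω using hω.2.2.1
  have hghi : g ≤ᵐ[P] fun ω => C₀ * h ω := by
    filter_upwards [hae] with ω hω using hω.2.2.2
  have hcondlo : (fun ω => c₀ * (Iproc P ℱ θ Λ t ω)) ≤ᵐ[P] Fop P ℱ θ ρ ε U Λ W t := by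
    have h1 : P[(c₀ • h)|ℱ t] ≤ᵐ[P] P[g|ℱ t] :=
      condExp_mono (hInt_h.smul c₀) hInt_g
        (by filter_upwards [hglo] with ω hω using hω)
    have h2 : P[(c₀ • h)|ℱ t] =ᵐ[P] c₀ • P[h|ℱ t] := condExp_smul c₀ h _
    filter_upwards [h1, h2] with ω h1ω h2ω
    have h3 : c₀ * (P[h|ℱ t]) ω ≤ (P[g|ℱ t]) ω := by
      rw [h2ω] at h1ω; simpa using h1ω
    exact h3
  have hcondhi : Fop P ℱ θ ρ ε U Λ W t ≤ᵐ[P] fun ω => C₀ * (Iproc P ℱ θ Λ t ω) := by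
    have h1 : P[g|ℱ t] ≤ᵐ[P] P[(C₀ • h)|ℱ t] :=
      condExp_mono hInt_g (hInt_h.smul C₀)
        (by filter_upwards [hghi] with ω hω using hω)
    have h2 : P[(C₀ • h)|ℱ t] =ᵐ[P] C₀ • P[h|ℱ t] := condExp_smul C₀ h _
    filter_upwards [h1, h2] with ω h1ω h2ω
    have h3 : (P[g|ℱ t]) ω ≤ C₀ * (P[h|ℱ t]) ω := by
      rw [h2ω] at h1ω; simpa using h1ω
    exact h3
  -- combine with the bounds on Iproc
  filter_upwards [hcondlo, hcondhi, hIbd t ht] with ω hlo hhi hI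
  obtain ⟨hI1', hI2'⟩ := hI
  have hI1 : kI * Iproc P ℱ θ Λ t ω ≤ Λ t ω ^ θ := hI1'
  have hI2 : Λ t ω ^ θ ≤ KI * Iproc P ℱ θ Λ t ω := hI2'
  have hlo' : c₀ * Iproc P ℱ θ Λ t ω ≤ Fop P ℱ θ ρ ε U Λ W t ω := hlo
  have hhi' : Fop P ℱ θ ρ ε U Λ W t ω ≤ C₀ * Iproc P ℱ θ Λ t ω := hhi
  constructor
  · have : c₀ / KI * Λ t ω ^ θ ≤ c₀ * Iproc P ℱ θ Λ t ω := by
      rw [div_mul_eq_mul_div, div_le_iff₀ hKI]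
      nlinarith [mul_le_mul_of_nonneg_left hI2 hc₀.le]
    exact le_trans this hlo'
  · have : C₀ * Iproc P ℱ θ Λ t ω ≤ C₀ / kI * Λ t ω ^ θ := by
      rw [div_mul_eq_mul_div, le_div_iff₀ hkI]
      have hX : 0 < Λ t ω ^ θ := Real.rpow_pos_of_pos (hΛpos t ω) θ
      nlinarith [mul_le_mul_of_nonneg_left hI1 hC₀.le]
    exact le_trans hhi' this


end EZSDU
end
end

section
/- Generalised backwards martingale convergence theorem: Let (Ω, 𝓕, P) be a probability space, let 𝓕 ⊇ 𝓕_0 ⊇ 𝓕_{-1} ⊇ 𝓕_{-2} ⊇ ⋯ be a nonincreasing sequence of sub-σ-algebras, and set 𝓕_{-∞} := ⋂_{k≥1} 𝓕_{-k}. Let X be a [0,∞]-valued random variable. Then E[X | 𝓕_{-n}] → E[X | 𝓕_{-∞}] P-almost surely as n → ∞. -/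
open MeasureTheory Filter Set Topology
open scoped ENNReal NNReal

noncomputable section

namespace EZSDU

variable {Ω : Type*} {m : MeasurableSpace Ω}

/-- Conditional expectation of a `[0,∞]`-valued random variable given a sub-σ-algebra,
defined as the a.s.-monotone limit of the conditional expectations of the truncations
`X ∧ k`. -/
def condExpENN (P : Measure Ω) (mm : MeasurableSpace Ω) (X : Ω → ENNReal) : Ω → ENNReal :=
  fun ω => ⨆ k : ℕ, ENNReal.ofReal ((P[(fun ω' => (min (X ω') (k : ENNReal)).toReal) | mm]) ω)


section Helpers
open Set Topology
open scoped ENNReal NNReal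

lemma measurable_of_tendsto_nat {m' : MeasurableSpace Ω} {χ : ℕ → Ω → ℝ} {ψ : Ω → ℝ}
    (h : ∀ j, Measurable[m'] (χ j)) (ht : ∀ ω, Tendsto (fun j => χ j ω) atTop (𝓝 (ψ ω))) :
    Measurable[m'] ψ := by
  letI := m'
  exact measurable_of_tendsto_metrizable' atTop h (tendsto_pi_nhds.2 ht)

lemma measurableSet_exists_tendsto_nat {m' : MeasurableSpace Ω} {χ : ℕ → Ω → ℝ}
    (h : ∀ j, Measurable[m'] (χ j)) :
    MeasurableSet[m'] {ω | ∃ l, Tendsto (fun j => χ j ω) atTop (𝓝 l)} := by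
  letI := m'
  exact measurableSet_exists_tendsto h

lemma exists_limit_fun (ℱ : ℕ → MeasurableSpace Ω) (hanti : Antitone ℱ)
    (φ : ℕ → Ω → ℝ) (hφ : ∀ j, Measurable[ℱ j] (φ j)) :
    ∃ ψ : Ω → ℝ, (∀ N, Measurable[ℱ N] ψ) ∧
      ∀ ω l, Tendsto (fun j => φ j ω) atTop (𝓝 l) → ψ ω = l := by
  set S : Set Ω := {ω | ∃ l, Tendsto (fun j => φ j ω) atTop (𝓝 l)} with hS
  refine ⟨S.indicator (fun ω => limUnder atTop (fun j => φ j ω)), ?_, ?_⟩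
  · intro N
    have hSmeas : MeasurableSet[ℱ N] S := by
      have hSeq : S = {ω | ∃ l, Tendsto (fun j => φ (j + N) ω) atTop (𝓝 l)} := by
        ext ω
        exact exists_congr fun l => (tendsto_add_atTop_iff_nat (f := fun j => φ j ω) N).symm
      rw [hSeq]
      exact measurableSet_exists_tendsto_nat fun j => (hφ (j + N)).mono (hanti (Nat.le_add_left N j)) le_rfl
    have hχ : ∀ j : ℕ, Measurable[ℱ N] (S.indicator (φ (j + N))) := fun j =>
      ((hφ (j + N)).mono (hanti (Nat.le_add_left N j)) le_rfl).indicator hSmeas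
    refine measurable_of_tendsto_nat hχ fun ω => ?_
    by_cases hω : ω ∈ S
    · obtain ⟨l, hl⟩ := hω
      have h1 : S.indicator (fun ω => limUnder atTop (fun j => φ j ω)) ω = l := by
        rw [Set.indicator_of_mem (by exact ⟨l, hl⟩) _, hl.limUnder_eq]
      rw [h1]
      have := (tendsto_add_atTop_iff_nat (f := fun j => φ j ω) N).2 hl
      exact this.congr fun j => (Set.indicator_of_mem (by exact ⟨l, hl⟩) _).symm
    · have h1 : S.indicator (fun ω => limUnder atTop (fun j => φ j ω)) ω = 0 :=
        Set.indicator_of_notMem hω _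
      rw [h1]
      exact tendsto_const_nhds.congr fun j => (Set.indicator_of_notMem hω _).symm
  · intro ω l h
    have hω : ω ∈ S := ⟨l, h⟩
    rw [Set.indicator_of_mem hω, h.limUnder_eq]

lemma measurable_iInf_of_forall {ℱ : ℕ → MeasurableSpace Ω} {ψ : Ω → ℝ}
    (h : ∀ N, Measurable[ℱ N] ψ) : Measurable[⨅ N, ℱ N] ψ := fun s hs =>
  MeasurableSpace.measurableSet_iInf.2 fun N => h N hs


lemma measurableSet_lt_fun {m' : MeasurableSpace Ω} {f : Ω → ℝ} (h : Measurable[m'] f) (c : ℝ) :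
    MeasurableSet[m'] {ω | c < f ω} := by
  letI := m'
  exact measurableSet_lt measurable_const h

lemma antitone_of_succ_le {ℱ : ℕ → MeasurableSpace Ω} (hanti : ∀ n, ℱ (n + 1) ≤ ℱ n) :
    Antitone ℱ :=
  antitone_nat_of_succ_le hanti

lemma maximal_aux (P : Measure Ω) [IsProbabilityMeasure P]
    (ℱ : ℕ → MeasurableSpace Ω) (hle : ∀ n, ℱ n ≤ m) (hanti : Antitone ℱ)
    {u : Ω → ℝ} (hu : Integrable u P) {lam : ℝ} (hlam : 0 < lam) :
    ∀ d k : ℕ, MeasurableSet[ℱ k] {ω | ∃ n, k ≤ n ∧ n ≤ k + d ∧ lam < (P[u|ℱ n]) ω} ∧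
      lam * (P {ω | ∃ n, k ≤ n ∧ n ≤ k + d ∧ lam < (P[u|ℱ n]) ω}).toReal
      ≤ ∫ ω in {ω | ∃ n, k ≤ n ∧ n ≤ k + d ∧ lam < (P[u|ℱ n]) ω}, u ω ∂P := by
  have hM : ∀ n, Measurable[ℱ n] (P[u|ℱ n]) := fun n => stronglyMeasurable_condExp.measurable
  have hEmeas : ∀ n k, k ≤ n → MeasurableSet[ℱ k] {ω | lam < (P[u|ℱ n]) ω} := fun n k hk =>
    hanti hk _ (measurableSet_lt_fun (hM n) lam)
  -- generic single-set estimate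
  have key : ∀ (k : ℕ) (A : Set Ω), MeasurableSet[ℱ k] A →
      (∀ ω ∈ A, lam < (P[u|ℱ k]) ω) → lam * (P A).toReal ≤ ∫ ω in A, u ω ∂P := by
    intro k A hA hAlt
    have hAm : MeasurableSet A := hle k A hA
    have h1 : ∫ _ in A, lam ∂P ≤ ∫ ω in A, (P[u|ℱ k]) ω ∂P := by
      refine setIntegral_mono_on (integrableOn_const (measure_ne_top P A))
        integrable_condExp.integrableOn hAm fun ω hω => (hAlt ω hω).le
    rw [setIntegral_const, smul_eq_mul, mul_comm] at h1
    rwa [setIntegral_condExp (hle k) hu hA] at h1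
  intro d
  induction d with
  | zero =>
    intro k
    have hset : {ω | ∃ n, k ≤ n ∧ n ≤ k + 0 ∧ lam < (P[u|ℱ n]) ω} = {ω | lam < (P[u|ℱ k]) ω} := by
      ext ω
      constructor
      · rintro ⟨n, hkn, hnk, h⟩
        rwa [le_antisymm hnk hkn] at h
      · intro h; exact ⟨k, le_rfl, le_rfl, h⟩
    rw [hset]
    exact ⟨hEmeas k k le_rfl, key k _ (hEmeas k k le_rfl) fun ω hω => hω⟩
  | succ d ih =>
    intro k
    set B := {ω | ∃ n, k + 1 ≤ n ∧ n ≤ k + 1 + d ∧ lam < (P[u|ℱ n]) ω} with hB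
    obtain ⟨hBmeas, hBineq⟩ := ih (k + 1)
    have hBk : MeasurableSet[ℱ k] B := hanti (Nat.le_succ k) _ hBmeas
    set A := {ω | lam < (P[u|ℱ k]) ω} \ B with hA
    have hAk : MeasurableSet[ℱ k] A := (hEmeas k k le_rfl).diff hBk
    have hdisj : Disjoint A B := disjoint_sdiff_self_left
    have hunion : {ω | ∃ n, k ≤ n ∧ n ≤ k + (d + 1) ∧ lam < (P[u|ℱ n]) ω} = A ∪ B := by
      rw [hA, Set.diff_union_self]
      ext ω
      constructor
      · rintro ⟨n, hkn, hnk, h⟩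
        rcases Nat.eq_or_lt_of_le hkn with rfl | hlt
        · exact Or.inl h
        · exact Or.inr ⟨n, hlt, by omega, h⟩
      · rintro (h | ⟨n, h1, h2, h3⟩)
        · exact ⟨k, le_rfl, by omega, h⟩
        · exact ⟨n, by omega, by omega, h3⟩
    rw [hunion]
    constructor
    · exact hAk.union hBk
    have hmeasU : (P (A ∪ B)).toReal = (P A).toReal + (P B).toReal := by
      rw [measure_union hdisj (hle (k+1) B hBmeas)]
      exact ENNReal.toReal_add (measure_ne_top P A) (measure_ne_top P B)
    have hIntU : ∫ ω in A ∪ B, u ω ∂P = (∫ ω in A, u ω ∂P) + ∫ ω in B, u ω ∂P :=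
      setIntegral_union hdisj (hle (k+1) B hBmeas) hu.integrableOn hu.integrableOn
    have hAineq : lam * (P A).toReal ≤ ∫ ω in A, u ω ∂P :=
      key k A hAk fun ω hω => hω.1
    rw [hmeasU, hIntU, mul_add]
    have : k + 1 + d = k + (d + 1) := by omega
    exact add_le_add hAineq hBineq

lemma maximal (P : Measure Ω) [IsProbabilityMeasure P]
    (ℱ : ℕ → MeasurableSpace Ω) (hle : ∀ n, ℱ n ≤ m) (hanti : Antitone ℱ)
    {u : Ω → ℝ} (hu : Integrable u P) (hu0 : 0 ≤ᵐ[P] u) {lam : ℝ} (hlam : 0 < lam) :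
    P {ω | ∃ n, lam < (P[u|ℱ n]) ω} ≤ ENNReal.ofReal ((∫ ω, u ω ∂P) / lam) := by
  have hset : {ω | ∃ n, lam < (P[u|ℱ n]) ω}
      = ⋃ N : ℕ, {ω | ∃ n, 0 ≤ n ∧ n ≤ 0 + N ∧ lam < (P[u|ℱ n]) ω} := by
    ext ω
    simp only [Set.mem_setOf_eq, Set.mem_iUnion]
    constructor
    · rintro ⟨n, h⟩; exact ⟨n, n, Nat.zero_le n, by omega, h⟩
    · rintro ⟨N, n, _, _, h⟩; exact ⟨n, h⟩
  rw [hset]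
  have hmono : Monotone (fun N : ℕ => {ω | ∃ n, 0 ≤ n ∧ n ≤ 0 + N ∧ lam < (P[u|ℱ n]) ω}) := by
    rintro a b hab ω ⟨n, h1, h2, h3⟩
    exact ⟨n, h1, by omega, h3⟩
  rw [hmono.directed_le.measure_iUnion]
  refine iSup_le fun N => ?_
  set T := {ω | ∃ n, 0 ≤ n ∧ n ≤ 0 + N ∧ lam < (P[u|ℱ n]) ω} with hT
  have h2 : lam * (P T).toReal ≤ ∫ ω, u ω ∂P :=
    (maximal_aux P ℱ hle hanti hu hlam N 0).2.trans (setIntegral_le_integral hu hu0)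
  have h3 : (P T).toReal ≤ (∫ ω, u ω ∂P) / lam := (le_div_iff₀ hlam).2 (by linarith)
  calc P T = ENNReal.ofReal (P T).toReal := (ENNReal.ofReal_toReal (measure_ne_top P T)).symm
    _ ≤ _ := ENNReal.ofReal_le_ofReal h3

lemma tendsto_nhds_zero_of_le {a : ℕ → ℝ} (h0 : ∀ q, 0 ≤ a q)
    (h : ∀ ε : ℝ, 0 < ε → ∃ K, ∀ q, K ≤ q → a q ≤ ε) : Tendsto a atTop (𝓝 0) := by
  rw [Metric.tendsto_atTop]
  intro ε hε
  obtain ⟨K, hK⟩ := h (ε / 2) (half_pos hε)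
  refine ⟨K, fun q hq => ?_⟩
  rw [Real.dist_eq, sub_zero, abs_of_nonneg (h0 q)]
  exact lt_of_le_of_lt (hK q hq) (half_lt_self hε)

lemma stronglyMeasurable_of_measurable' {m' : MeasurableSpace Ω} {ψ : Ω → ℝ}
    (h : Measurable[m'] ψ) : StronglyMeasurable[m'] ψ := by
  letI := m'
  exact h.stronglyMeasurable

-- placeholders for already-proven lemmas

lemma cauchy_est (P : Measure Ω) [IsProbabilityMeasure P]
    (ℱ : ℕ → MeasurableSpace Ω) (hle : ∀ n, ℱ n ≤ m) (hanti : Antitone ℱ)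
    {f : Ω → ℝ} (hf : Integrable f P) {C : ℝ} (hbdd : ∀ᵐ ω ∂P, |f ω| ≤ C) :
    ∀ ε > (0:ℝ), ∃ K : ℕ, ∀ p q, K ≤ p → K ≤ q →
      ∫ ω, |(P[f|ℱ p]) ω - (P[f|ℱ q]) ω| ∂P ≤ ε := by
  set g : ℕ → Ω → ℝ := fun n => P[f|ℱ n] with hg
  have hgint : ∀ n, Integrable (g n) P := fun n => integrable_condExp
  have hgbdd : ∀ n, ∀ᵐ ω ∂P, |g n ω| ≤ C := by
    intro n
    have h0C : (0:ℝ) ≤ C := le_trans (abs_nonneg _) hbdd.exists.choose_spec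
    have := ae_bdd_condExp_of_ae_bdd (m := ℱ n) (R := ⟨C, h0C⟩) (by exact hbdd)
    exact this
  have hgmeas : ∀ n, AEStronglyMeasurable (g n) P := fun n => (hgint n).aestronglyMeasurable
  -- product integrability
  have hprod : ∀ p q, Integrable (fun ω => g p ω * g q ω) P := fun p q =>
    (hgint q).bdd_mul (hgmeas p) ((hgbdd p).mono fun ω h => by simpa using h)
  -- key identity
  have key : ∀ p q, p ≤ q → ∫ ω, g p ω * g q ω ∂P = ∫ ω, g q ω * g q ω ∂P := by
    intro p q hpq
    have h1 : P[g p|ℱ q] =ᵐ[P] g q := condExp_condExp_of_le (hanti hpq) (hle p)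
    have h2 : P[fun ω => g q ω * g p ω|ℱ q] =ᵐ[P] fun ω => g q ω * (P[g p|ℱ q]) ω := by
      have := condExp_mul_of_stronglyMeasurable_left (μ := P) (m := ℱ q)
        (stronglyMeasurable_condExp (f := f)) (hprod q p) (hgint p)
      exact this
    calc ∫ ω, g p ω * g q ω ∂P = ∫ ω, g q ω * g p ω ∂P := by simp [mul_comm]
      _ = ∫ ω, (P[fun ω => g q ω * g p ω|ℱ q]) ω ∂P := (integral_condExp (hle q)).symm
      _ = ∫ ω, g q ω * g q ω ∂P := by
          refine integral_congr_ae (h2.trans ?_)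
          filter_upwards [h1] with ω hω
          rw [hω]
  set b : ℕ → ℝ := fun n => ∫ ω, g n ω * g n ω ∂P with hb
  have hdiff : ∀ p q, p ≤ q →
      ∫ ω, (g p ω - g q ω) * (g p ω - g q ω) ∂P = b p - b q := by
    intro p q hpq
    have e1 : ∫ ω, (g p ω - g q ω) * (g p ω - g q ω) ∂P
        = ∫ ω, (g p ω * g p ω - 2 * (g p ω * g q ω) + g q ω * g q ω) ∂P := by
      congr 1; funext ω; ring
    have i2 : Integrable (fun ω => 2 * (g p ω * g q ω)) P := (hprod p q).const_mul 2
    have i1 : Integrable (fun ω => g p ω * g p ω - 2 * (g p ω * g q ω)) P := (hprod p p).sub i2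
    rw [e1, integral_add i1 (hprod q q), integral_sub (hprod p p) i2, integral_const_mul,
      key p q hpq]
    ring
  have hbanti : Antitone b := by
    intro p q hpq
    have h1 := hdiff p q hpq
    have h2 : (0:ℝ) ≤ ∫ ω, (g p ω - g q ω) * (g p ω - g q ω) ∂P :=
      integral_nonneg fun ω => mul_self_nonneg _
    linarith
  have hb0 : ∀ n, 0 ≤ b n := fun n => integral_nonneg fun ω => mul_self_nonneg _
  have hbdd2 : BddBelow (Set.range b) := ⟨0, by rintro x ⟨n, rfl⟩; exact hb0 n⟩
  have hbtend : Tendsto b atTop (𝓝 (⨅ n, b n)) := tendsto_atTop_ciInf hbanti hbdd2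
  intro ε hε
  -- choose K with b K - iInf b < ε^2 /2...
  have hK : ∃ K, b K < (⨅ n, b n) + ε ^ 2 / 2 :=
    (hbtend.eventually_lt_const (lt_add_of_pos_right _ (by positivity) : (⨅ n, b n) < (⨅ n, b n) + ε ^ 2 / 2)).exists
  obtain ⟨K, hKlt⟩ := hK
  refine ⟨K, fun p q hp hq => ?_⟩
  -- wlog via cases
  have main : ∀ p q, K ≤ p → p ≤ q → ∫ ω, |g p ω - g q ω| ∂P ≤ ε := by
    intro p q hp hpq
    have hsq : ∫ ω, (g p ω - g q ω) * (g p ω - g q ω) ∂P ≤ ε ^ 2 / 2 + ε ^ 2 / 2 := by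
      have h1 : b p ≤ b K := hbanti hp
      have h2 : ⨅ n, b n ≤ b q := ciInf_le hbdd2 q
      rw [hdiff p q hpq]
      have := sq_nonneg ε
      linarith
    have hdint : Integrable (fun ω => g p ω - g q ω) P := (hgint p).sub (hgint q)
    have hddint : Integrable (fun ω => (g p ω - g q ω) * (g p ω - g q ω)) P := by
      have heq : (fun ω => (g p ω - g q ω) * (g p ω - g q ω))
          = fun ω => g p ω * g p ω - g p ω * g q ω - g q ω * g p ω + g q ω * g q ω := by
        funext ω; ring
      rw [heq]
      exact (((hprod p p).sub (hprod p q)).sub (hprod q p)).add (hprod q q)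
    have hptw : ∀ ω, |g p ω - g q ω|
        ≤ ((g p ω - g q ω) * (g p ω - g q ω) + ε ^ 2) / (2 * ε) := by
      intro ω
      rw [le_div_iff₀ (by positivity)]
      nlinarith [sq_nonneg (|g p ω - g q ω| - ε), sq_abs (g p ω - g q ω),
        abs_nonneg (g p ω - g q ω)]
    have hint2 : Integrable
        (fun ω => ((g p ω - g q ω) * (g p ω - g q ω) + ε ^ 2) / (2 * ε)) P :=
      (hddint.add (integrable_const _)).div_const _
    have hmono := integral_mono hdint.abs hint2 hptw
    rw [integral_div, integral_add hddint (integrable_const _), integral_const] at hmono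
    simp only [probReal_univ, one_smul] at hmono
    refine hmono.trans ?_
    rw [div_le_iff₀ (by positivity)]
    nlinarith
  rcases le_total p q with hpq | hqp
  · exact main p q hp hpq
  · have := main q p hq hqp
    calc ∫ ω, |g p ω - g q ω| ∂P = ∫ ω, |g q ω - g p ω| ∂P := by
          simp [abs_sub_comm]
      _ ≤ ε := this

lemma l1_tendsto_of_bdd (P : Measure Ω) [IsProbabilityMeasure P]
    (ℱ : ℕ → MeasurableSpace Ω) (hle : ∀ n, ℱ n ≤ m) (hanti : Antitone ℱ)
    {f : Ω → ℝ} (hf : Integrable f P) {C : ℝ} (hbdd : ∀ᵐ ω ∂P, |f ω| ≤ C) :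
    Tendsto (fun q => ∫ ω, |(P[f|ℱ q]) ω - (P[f|⨅ k, ℱ k]) ω| ∂P) atTop (𝓝 0) := by
  set g : ℕ → Ω → ℝ := fun q => P[f|ℱ q] with hg
  have hgint : ∀ q, Integrable (g q) P := fun q => integrable_condExp
  have h0C : (0:ℝ) ≤ C := le_trans (abs_nonneg _) hbdd.exists.choose_spec
  have hgbdd : ∀ q, ∀ᵐ ω ∂P, |g q ω| ≤ C := by
    intro q
    have := ae_bdd_condExp_of_ae_bdd (m := ℱ q) (R := ⟨C, h0C⟩) (by exact hbdd)
    exact this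
  have hgm : ∀ q, Measurable[ℱ q] (g q) := fun q => stronglyMeasurable_condExp.measurable
  -- subsequence selection
  choose Ksel hKsel using fun j : ℕ => cauchy_est P ℱ hle hanti hf hbdd ((1/2) ^ j) (by positivity)
  set n : ℕ → ℕ := fun j => j + (Finset.range (j + 1)).sup Ksel with hn
  have hnmono : Monotone n := fun a b hab => add_le_add hab
    (Finset.sup_mono (Finset.range_subset_range.2 (by omega)))
  have hnge : ∀ j, j ≤ n j := fun j => Nat.le_add_right _ _
  have hnK : ∀ j, Ksel j ≤ n j := fun j =>
    le_trans (Finset.le_sup (Finset.self_mem_range_succ j)) (Nat.le_add_left _ _)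
  have hnear : ∀ j p q, n j ≤ p → n j ≤ q → ∫ ω, |g p ω - g q ω| ∂P ≤ (1/2) ^ j :=
    fun j p q hp hq => hKsel j p q (le_trans (hnK j) hp) (le_trans (hnK j) hq)
  -- a.e. convergence of the subsequence
  have haeconv : ∀ᵐ ω ∂P, ∃ l, Tendsto (fun j => g (n j) ω) atTop (𝓝 l) := by
    set d : ℕ → Ω → ℝ := fun j ω => g (n (j + 1)) ω - g (n j) ω with hd
    have hdint : ∀ j, Integrable (d j) P := fun j => (hgint _).sub (hgint _)
    have hdlin : ∀ j, ∫⁻ ω, (‖d j ω‖₊ : ℝ≥0∞) ∂P ≤ ENNReal.ofReal ((1/2) ^ j) := by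
      intro j
      have h1 : ENNReal.ofReal (∫ ω, |d j ω| ∂P) = ∫⁻ ω, ENNReal.ofReal |d j ω| ∂P :=
        ofReal_integral_eq_lintegral_ofReal (hdint j).abs
          (Filter.Eventually.of_forall fun ω => abs_nonneg _)
      have h2 : ∀ ω, (‖d j ω‖₊ : ℝ≥0∞) = ENNReal.ofReal |d j ω| := fun ω =>
        Real.enorm_eq_ofReal_abs _
      calc ∫⁻ ω, (‖d j ω‖₊ : ℝ≥0∞) ∂P = ∫⁻ ω, ENNReal.ofReal |d j ω| ∂P := by
            simp_rw [h2]
        _ = ENNReal.ofReal (∫ ω, |d j ω| ∂P) := h1.symm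
        _ ≤ ENNReal.ofReal ((1/2) ^ j) := ENNReal.ofReal_le_ofReal
            (hnear j _ _ (hnmono (Nat.le_succ j)) le_rfl)
    have hdmeas : ∀ j, AEMeasurable (fun ω => (‖d j ω‖₊ : ℝ≥0∞)) P := fun j =>
      (hdint j).aestronglyMeasurable.aemeasurable.nnnorm.coe_nnreal_ennreal
    have htsum : ∫⁻ ω, ∑' j, (‖d j ω‖₊ : ℝ≥0∞) ∂P ≠ ⊤ := by
      rw [lintegral_tsum hdmeas]
      refine ne_top_of_le_ne_top ?_ (ENNReal.tsum_le_tsum hdlin)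
      have he : ∀ j : ℕ, ENNReal.ofReal ((1/2) ^ j) = ENNReal.ofReal (1/2) ^ j := fun j =>
        ENNReal.ofReal_pow (by norm_num : (0:ℝ) ≤ 1/2) j
      simp_rw [he, ENNReal.tsum_geometric]
      refine ENNReal.inv_ne_top.2 fun h => ?_
      rw [tsub_eq_zero_iff_le] at h
      exact absurd h (not_le.2 (ENNReal.ofReal_lt_one.2 (by norm_num)))
    have hfin : ∀ᵐ ω ∂P, ∑' j, (‖d j ω‖₊ : ℝ≥0∞) < ⊤ :=
      ae_lt_top' (AEMeasurable.ennreal_tsum hdmeas) htsum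
    filter_upwards [hfin] with ω hω
    have hsum1 : Summable fun j => ‖d j ω‖₊ := ENNReal.tsum_coe_ne_top_iff_summable.1 hω.ne
    have hsum2 : Summable fun j => d j ω := by
      refine Summable.of_norm ?_
      have := NNReal.summable_coe.2 hsum1
      simpa [coe_nnnorm] using this
    have htel : ∀ j, ∑ i ∈ Finset.range j, d i ω = g (n j) ω - g (n 0) ω := fun j =>
      Finset.sum_range_sub (fun i => g (n i) ω) j
    refine ⟨(∑' j, d j ω) + g (n 0) ω, ?_⟩
    have := hsum2.hasSum.tendsto_sum_nat
    have h2 := this.add_const (g (n 0) ω)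
    refine h2.congr fun j => ?_
    rw [htel j]
    ring
  -- limit function
  obtain ⟨ψ, hψm, hψl⟩ := exists_limit_fun (fun j => ℱ (n j))
    (fun a b hab => hanti (hnmono hab)) (fun j => g (n j)) (fun j => hgm (n j))
  have haetend : ∀ᵐ ω ∂P, Tendsto (fun j => g (n j) ω) atTop (𝓝 (ψ ω)) := by
    filter_upwards [haeconv] with ω hω
    obtain ⟨l, hl⟩ := hω
    rwa [hψl ω l hl]
  have hψmeasN : ∀ N, Measurable[ℱ N] ψ := fun N => (hψm N).mono (hanti (hnge N)) le_rfl
  have hψiInf : Measurable[⨅ k, ℱ k] ψ := measurable_iInf_of_forall hψmeasN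
  have hψmeas : Measurable ψ := (hψmeasN 0).mono (hle 0) le_rfl
  have hψbdd : ∀ᵐ ω ∂P, |ψ ω| ≤ C := by
    filter_upwards [haetend, ae_all_iff.2 hgbdd] with ω hω hb
    exact le_of_tendsto hω.abs (Filter.Eventually.of_forall fun j => hb (n j))
  have hψint : Integrable ψ P := by
    refine (integrable_const C).mono' hψmeas.aestronglyMeasurable ?_
    filter_upwards [hψbdd] with ω hω
    simpa [Real.norm_eq_abs] using hω
  -- L¹ convergence along the subsequence
  have hsubL1 : Tendsto (fun j => ∫ ω, |g (n j) ω - ψ ω| ∂P) atTop (𝓝 0) := by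
    have h0 : (𝓝 (0:ℝ)) = 𝓝 (∫ _ω, (0:ℝ) ∂P) := by simp
    rw [h0]
    refine tendsto_integral_of_dominated_convergence (fun _ => 2 * C)
      (fun j => ((hgint (n j)).sub hψint).abs.aestronglyMeasurable)
      (integrable_const _) (fun j => ?_) ?_
    · filter_upwards [hgbdd (n j), hψbdd] with ω h1 h2
      rw [Real.norm_eq_abs, abs_abs]
      calc |g (n j) ω - ψ ω| ≤ |g (n j) ω| + |ψ ω| := abs_sub _ _
        _ ≤ 2 * C := by linarith
    · filter_upwards [haetend] with ω hω
      simpa using (hω.sub_const (ψ ω)).abs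
  -- L¹ convergence of the full sequence
  have htri : ∀ q j, ∫ ω, |g q ω - ψ ω| ∂P
      ≤ (∫ ω, |g q ω - g (n j) ω| ∂P) + ∫ ω, |g (n j) ω - ψ ω| ∂P := by
    intro q j
    have ia : Integrable (fun ω => |g q ω - g (n j) ω|) P := ((hgint q).sub (hgint (n j))).abs
    have ib : Integrable (fun ω => |g (n j) ω - ψ ω|) P := ((hgint (n j)).sub hψint).abs
    have ic : Integrable (fun ω => |g q ω - ψ ω|) P := ((hgint q).sub hψint).abs
    rw [← integral_add ia ib]
    exact integral_mono ic (ia.add ib) fun ω => abs_sub_le _ _ _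
  have htendψ : Tendsto (fun q => ∫ ω, |g q ω - ψ ω| ∂P) atTop (𝓝 0) := by
    refine tendsto_nhds_zero_of_le (fun q => integral_nonneg fun ω => abs_nonneg _) ?_
    intro ε hε
    obtain ⟨j0, hj0⟩ := exists_pow_lt_of_lt_one (half_pos hε) (by norm_num : (1:ℝ)/2 < 1)
    obtain ⟨J, hJ⟩ := (Metric.tendsto_atTop.1 hsubL1) (ε / 2) (half_pos hε)
    set j := max j0 J with hj
    have h1 : (1/2 : ℝ) ^ j ≤ ε / 2 := by
      refine le_trans (pow_le_pow_of_le_one (by norm_num) (by norm_num) (le_max_left j0 J)) hj0.le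
    have h2 : ∫ ω, |g (n j) ω - ψ ω| ∂P ≤ ε / 2 := by
      have := hJ j (le_max_right j0 J)
      rw [Real.dist_eq, sub_zero] at this
      exact le_trans (le_abs_self _) this.le
    refine ⟨n j, fun q hq => ?_⟩
    refine le_trans (htri q j) ?_
    have h3 : ∫ ω, |g q ω - g (n j) ω| ∂P ≤ (1/2) ^ j := hnear j q (n j) hq le_rfl
    linarith
  -- identify ψ with the conditional expectation
  have hinfle : (⨅ k, ℱ k) ≤ m := le_trans (iInf_le ℱ 0) (hle 0)
  have hψeq : ψ =ᵐ[P] P[f|⨅ k, ℱ k] := by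
    refine ae_eq_condExp_of_forall_setIntegral_eq hinfle hf
      (fun s _ _ => hψint.integrableOn) (fun s hs _ => ?_)
      (stronglyMeasurable_of_measurable' hψiInf).aestronglyMeasurable
    have hsk : ∀ q, MeasurableSet[ℱ q] s := fun q => (iInf_le ℱ q) s hs
    have hsm : MeasurableSet s := hinfle s hs
    have hconst : ∀ j : ℕ, ∫ ω in s, g (n j) ω ∂P = ∫ ω in s, f ω ∂P := fun j =>
      setIntegral_condExp (hle (n j)) hf (hsk (n j))
    have h1 : Tendsto (fun j => ∫ ω in s, g (n j) ω ∂P) atTop (𝓝 (∫ ω in s, ψ ω ∂P)) := by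
      rw [tendsto_iff_norm_sub_tendsto_zero]
      refine squeeze_zero (fun j => norm_nonneg _) (fun j => ?_) hsubL1
      rw [← integral_sub (hgint (n j)).integrableOn hψint.integrableOn]
      refine le_trans (norm_integral_le_integral_norm _) ?_
      refine le_trans (integral_mono_measure Measure.restrict_le_self
        (Filter.Eventually.of_forall fun ω => norm_nonneg _)
        ((hgint (n j)).sub hψint).norm) ?_
      simp [Real.norm_eq_abs]
    have h2 : Tendsto (fun j => ∫ ω in s, g (n j) ω ∂P) atTop (𝓝 (∫ ω in s, f ω ∂P)) := by
      simp_rw [hconst]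
      exact tendsto_const_nhds
    exact tendsto_nhds_unique h1 h2
  refine htendψ.congr fun q => ?_
  refine integral_congr_ae ?_
  filter_upwards [hψeq] with ω hω
  rw [hω]

lemma l1_tendsto (P : Measure Ω) [IsProbabilityMeasure P]
    (ℱ : ℕ → MeasurableSpace Ω) (hle : ∀ n, ℱ n ≤ m) (hanti : Antitone ℱ)
    {f : Ω → ℝ} (hf : Integrable f P) :
    Tendsto (fun q => ∫ ω, |(P[f|ℱ q]) ω - (P[f|⨅ k, ℱ k]) ω| ∂P) atTop (𝓝 0) := by
  set tr : ℕ → Ω → ℝ := fun C ω => max (-(C:ℝ)) (min (C:ℝ) (f ω)) with htr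
  have htrabs : ∀ C ω, |tr C ω| ≤ |f ω| := by
    intro C ω
    have h0 : (0:ℝ) ≤ (C:ℝ) := Nat.cast_nonneg C
    have ha := abs_nonneg (f ω)
    rw [abs_le]
    constructor
    · exact le_trans (le_min (by linarith) (neg_abs_le _)) (le_max_right _ _)
    · exact max_le (by linarith) (le_trans (min_le_right _ _) (le_abs_self _))
  have htrbdd : ∀ C : ℕ, ∀ ω, |tr C ω| ≤ (C:ℝ) := by
    intro C ω
    have h0 : (0:ℝ) ≤ (C:ℝ) := Nat.cast_nonneg C
    rw [abs_le]
    exact ⟨le_max_left _ _, max_le (by linarith) (min_le_left _ _)⟩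
  have htrmeas : ∀ C : ℕ, AEStronglyMeasurable (tr C) P := by
    intro C
    rw [aestronglyMeasurable_iff_aemeasurable]
    exact aemeasurable_const.max (aemeasurable_const.min hf.aestronglyMeasurable.aemeasurable)
  have htrint : ∀ C : ℕ, Integrable (tr C) P := by
    intro C
    refine hf.abs.mono' (htrmeas C) ?_
    exact Filter.Eventually.of_forall fun ω => by
      simpa [Real.norm_eq_abs] using htrabs C ω
  have hdiffto : Tendsto (fun C : ℕ => ∫ ω, |f ω - tr C ω| ∂P) atTop (𝓝 0) := by
    have h0 : (𝓝 (0:ℝ)) = 𝓝 (∫ _ω, (0:ℝ) ∂P) := by simp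
    rw [h0]
    refine tendsto_integral_of_dominated_convergence (fun ω => 2 * |f ω|)
      (fun C => (hf.sub (htrint C)).abs.aestronglyMeasurable)
      (hf.abs.const_mul 2) (fun C => Filter.Eventually.of_forall fun ω => ?_)
      (Filter.Eventually.of_forall fun ω => ?_)
    · rw [Real.norm_eq_abs, abs_abs]
      calc |f ω - tr C ω| ≤ |f ω| + |tr C ω| := abs_sub _ _
        _ ≤ 2 * |f ω| := by linarith [htrabs C ω]
    · have hev : ∀ᶠ C : ℕ in atTop, |f ω - tr C ω| = 0 := by
        refine eventually_atTop.2 ⟨⌈|f ω|⌉₊, fun C hC => ?_⟩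
        have hCf : |f ω| ≤ (C:ℝ) := le_trans (Nat.le_ceil _) (Nat.cast_le.2 hC)
        have h1 : min (C:ℝ) (f ω) = f ω := min_eq_right (le_trans (le_abs_self _) hCf)
        have h2 : tr C ω = f ω := by
          rw [htr]
          simp only [h1]
          exact max_eq_right (by linarith [neg_abs_le (f ω)])
        simp [h2]
      exact Tendsto.congr' (hev.mono fun C h => h.symm) tendsto_const_nhds
  refine tendsto_nhds_zero_of_le (fun q => integral_nonneg fun ω => abs_nonneg _) ?_
  intro ε hε
  obtain ⟨C0, hC0⟩ := (Metric.tendsto_atTop.1 hdiffto) (ε / 4) (by linarith)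
  set C := C0 with hC
  have hCest : ∫ ω, |f ω - tr C ω| ∂P ≤ ε / 4 := by
    have := hC0 C le_rfl
    rw [Real.dist_eq, sub_zero] at this
    exact le_trans (le_abs_self _) this.le
  have hbC := l1_tendsto_of_bdd P ℱ hle hanti (htrint C)
    (Filter.Eventually.of_forall (htrbdd C))
  obtain ⟨K, hK⟩ := (Metric.tendsto_atTop.1 hbC) (ε / 4) (by linarith)
  refine ⟨K, fun q hq => ?_⟩
  have hd : Integrable (fun ω => f ω - tr C ω) P := hf.sub (htrint C)
  have heq : ∀ (mm : MeasurableSpace Ω),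
      P[f|mm] =ᵐ[P] fun ω => (P[tr C|mm]) ω + (P[fun ω => f ω - tr C ω|mm]) ω := by
    intro mm
    have h1 : f = fun ω => tr C ω + (f ω - tr C ω) := by funext ω; ring
    have h2 := condExp_add (μ := P) (m := mm) (htrint C) hd
    calc P[f|mm] = P[fun ω => tr C ω + (f ω - tr C ω)|mm] := by rw [← h1]
      _ =ᵐ[P] _ := h2
  have iA : Integrable (fun ω => |(P[tr C|ℱ q]) ω - (P[tr C|⨅ k, ℱ k]) ω|) P :=
    (integrable_condExp.sub integrable_condExp).abs
  have iB : Integrable (fun ω => |(P[fun ω => f ω - tr C ω|ℱ q]) ω|) P :=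
    integrable_condExp.abs
  have iD : Integrable (fun ω => |(P[fun ω => f ω - tr C ω|⨅ k, ℱ k]) ω|) P :=
    integrable_condExp.abs
  have iL : Integrable (fun ω => |(P[f|ℱ q]) ω - (P[f|⨅ k, ℱ k]) ω|) P :=
    (integrable_condExp.sub integrable_condExp).abs
  have hptw : ∀ᵐ ω ∂P, |(P[f|ℱ q]) ω - (P[f|⨅ k, ℱ k]) ω|
      ≤ |(P[tr C|ℱ q]) ω - (P[tr C|⨅ k, ℱ k]) ω|
        + (|(P[fun ω => f ω - tr C ω|ℱ q]) ω| + |(P[fun ω => f ω - tr C ω|⨅ k, ℱ k]) ω|) := by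
    filter_upwards [heq (ℱ q), heq (⨅ k, ℱ k)] with ω h1 h2
    rw [h1, h2]
    set a := (P[tr C|ℱ q]) ω
    set b := (P[fun ω => f ω - tr C ω|ℱ q]) ω
    set c := (P[tr C|⨅ k, ℱ k]) ω
    set d' := (P[fun ω => f ω - tr C ω|⨅ k, ℱ k]) ω
    have h3 : a + b - (c + d') = (a - c) + (b + -d') := by ring
    rw [h3]
    refine le_trans (abs_add_le _ _) ?_
    refine add_le_add le_rfl (le_trans (abs_add_le _ _) ?_)
    rw [abs_neg]
  have iAll : Integrable (fun ω => |(P[tr C|ℱ q]) ω - (P[tr C|⨅ k, ℱ k]) ω|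
      + (|(P[fun ω => f ω - tr C ω|ℱ q]) ω| + |(P[fun ω => f ω - tr C ω|⨅ k, ℱ k]) ω|)) P :=
    iA.add (iB.add iD)
  have iBD : Integrable (fun ω => |(P[fun ω => f ω - tr C ω|ℱ q]) ω|
      + |(P[fun ω => f ω - tr C ω|⨅ k, ℱ k]) ω|) P := iB.add iD
  have hmono := integral_mono_ae iL iAll hptw
  rw [integral_add iA iBD, integral_add iB iD] at hmono
  have hB : ∫ ω, |(P[fun ω => f ω - tr C ω|ℱ q]) ω| ∂P ≤ ∫ ω, |f ω - tr C ω| ∂P :=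
    integral_abs_condExp_le _
  have hD : ∫ ω, |(P[fun ω => f ω - tr C ω|⨅ k, ℱ k]) ω| ∂P ≤ ∫ ω, |f ω - tr C ω| ∂P :=
    integral_abs_condExp_le _
  have hA : ∫ ω, |(P[tr C|ℱ q]) ω - (P[tr C|⨅ k, ℱ k]) ω| ∂P ≤ ε / 4 := by
    have := hK q hq
    rw [Real.dist_eq, sub_zero] at this
    exact le_trans (le_abs_self _) this.le
  linarith

lemma ae_tendsto_condExp (P : Measure Ω) [IsProbabilityMeasure P]
    (ℱ : ℕ → MeasurableSpace Ω) (hle : ∀ n, ℱ n ≤ m) (hanti : Antitone ℱ)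
    {f : Ω → ℝ} (hf : Integrable f P) :
    ∀ᵐ ω ∂P, Tendsto (fun q => (P[f|ℱ q]) ω) atTop (𝓝 ((P[f|⨅ k, ℱ k]) ω)) := by
  set e : Ω → ℝ := P[f|⨅ k, ℱ k] with he
  have heint : Integrable e P := integrable_condExp
  have hex : ∀ j : ℕ, ∃ k, ∫ ω, |(P[f|ℱ k]) ω - e ω| ∂P ≤ (1/8 : ℝ)^j := by
    intro j
    obtain ⟨K, hK⟩ := (Metric.tendsto_atTop.1 (l1_tendsto P ℱ hle hanti hf)) ((1/8 : ℝ)^j)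
      (by positivity)
    refine ⟨K, ?_⟩
    have := hK K le_rfl
    rw [Real.dist_eq, sub_zero] at this
    exact le_trans (le_abs_self _) this.le
  choose k hk using hex
  set h : ℕ → Ω → ℝ := fun j ω => (P[f|ℱ (k j)]) ω - e ω with hh
  have hhint : ∀ j, Integrable (h j) P := fun j => integrable_condExp.sub heint
  set habs : ℕ → Ω → ℝ := fun j ω => |h j ω| with hhabs
  have habsint : ∀ j, Integrable (habs j) P := fun j => (hhint j).abs
  set s : ℕ → Set Ω := fun j => {ω | ∃ q, (1/2 : ℝ)^j < (P[habs j|ℱ q]) ω} with hs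
  have hsmeas : ∀ j, P (s j) ≤ ENNReal.ofReal ((1/4 : ℝ)^j) := by
    intro j
    refine le_trans (maximal P ℱ hle hanti (habsint j)
      (Filter.Eventually.of_forall fun ω => abs_nonneg _) (by positivity)) ?_
    refine ENNReal.ofReal_le_ofReal ?_
    rw [div_le_iff₀ (by positivity)]
    calc ∫ ω, habs j ω ∂P ≤ (1/8 : ℝ)^j := hk j
      _ = (1/4 : ℝ)^j * (1/2 : ℝ)^j := by rw [← mul_pow]; norm_num
  have hBC : ∀ᵐ ω ∂P, ∀ᶠ j in atTop, ω ∉ s j := by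
    refine ae_eventually_notMem ?_
    refine ne_top_of_le_ne_top ?_ (ENNReal.tsum_le_tsum hsmeas)
    have he4 : ∀ j : ℕ, ENNReal.ofReal ((1/4 : ℝ)^j) = ENNReal.ofReal (1/4) ^ j := fun j =>
      ENNReal.ofReal_pow (by norm_num : (0:ℝ) ≤ 1/4) j
    simp_rw [he4, ENNReal.tsum_geometric]
    refine ENNReal.inv_ne_top.2 fun hcon => ?_
    rw [tsub_eq_zero_iff_le] at hcon
    exact absurd hcon (not_le.2 (ENNReal.ofReal_lt_one.2 (by norm_num)))
  have hid : ∀ j q : ℕ, ∀ᵐ ω ∂P, k j ≤ q →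
      |(P[f|ℱ q]) ω - e ω| ≤ (P[habs j|ℱ q]) ω := by
    intro j q
    by_cases hjq : k j ≤ q
    swap
    · exact Filter.Eventually.of_forall fun ω hcon => absurd hcon hjq
    have ha : P[P[f|ℱ (k j)]|ℱ q] =ᵐ[P] P[f|ℱ q] := condExp_condExp_of_le (hanti hjq) (hle (k j))
    have hb : P[e|ℱ q] = e :=
      condExp_of_stronglyMeasurable (hle q) (stronglyMeasurable_condExp.mono (iInf_le ℱ q)) heint
    have hc := condExp_sub (μ := P) (m := ℱ q) (integrable_condExp (f := f) (m := ℱ (k j))) heint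
    have h2 : P[h j|ℱ q] ≤ᵐ[P] P[habs j|ℱ q] :=
      condExp_mono (hhint j) (habsint j) (Filter.Eventually.of_forall fun ω => le_abs_self _)
    have h3 : P[fun ω => -(h j ω)|ℱ q] ≤ᵐ[P] P[habs j|ℱ q] :=
      condExp_mono (hhint j).neg (habsint j)
        (Filter.Eventually.of_forall fun ω => neg_le_abs _)
    have h4 : P[fun ω => -(h j ω)|ℱ q] =ᵐ[P] fun ω => -((P[h j|ℱ q]) ω) := by
      have := condExp_neg (μ := P) (m := ℱ q) (h j)
      exact this
    filter_upwards [ha, hc, h2, h3, h4] with ω haω hcω h2ω h3ω h4ω hjq'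
    have hPh : (P[h j|ℱ q]) ω = (P[f|ℱ q]) ω - e ω := by
      have : (P[h j|ℱ q]) ω = (P[P[f|ℱ (k j)]|ℱ q]) ω - (P[e|ℱ q]) ω := by
        have := hcω
        simp only [Pi.sub_apply] at this
        exact this
      rw [this, haω, hb]
    rw [← hPh]
    rw [abs_le']
    exact ⟨h2ω, by linarith [h3ω, h4ω]⟩
  have hidall : ∀ᵐ ω ∂P, ∀ j q : ℕ, k j ≤ q →
      |(P[f|ℱ q]) ω - e ω| ≤ (P[habs j|ℱ q]) ω :=
    ae_all_iff.2 fun j => ae_all_iff.2 fun q => hid j q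
  filter_upwards [hidall, hBC] with ω hω hev
  rw [Metric.tendsto_atTop]
  intro ε hε
  obtain ⟨j0, hj0⟩ := exists_pow_lt_of_lt_one hε (by norm_num : (1:ℝ)/2 < 1)
  obtain ⟨J, hJ⟩ := eventually_atTop.1 hev
  set j := max j0 J with hj
  have hnotin : ω ∉ s j := hJ j (le_max_right _ _)
  refine ⟨k j, fun q hq => ?_⟩
  rw [Real.dist_eq]
  have hle2 : (P[habs j|ℱ q]) ω ≤ (1/2 : ℝ)^j := by
    by_contra hcon
    exact hnotin ⟨q, not_le.1 hcon⟩
  calc |(P[f|ℱ q]) ω - e ω| ≤ (P[habs j|ℱ q]) ω := hω j q hq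
    _ ≤ (1/2 : ℝ)^j := hle2
    _ ≤ (1/2 : ℝ)^j0 :=
        pow_le_pow_of_le_one (by norm_num) (by norm_num) (le_max_left _ _)
    _ < ε := hj0

lemma ofReal_integral' {μ : Measure Ω} {f : Ω → ℝ} (hfi : Integrable f μ) (hnn : 0 ≤ᵐ[μ] f) :
    ENNReal.ofReal (∫ x, f x ∂μ) = ∫⁻ x, ENNReal.ofReal (f x) ∂μ :=
  ofReal_integral_eq_lintegral_ofReal hfi hnn

lemma measurable_iSup_ofReal {mm : MeasurableSpace Ω} {g : ℕ → Ω → ℝ}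
    (h : ∀ k, Measurable[mm] (g k)) :
    Measurable[mm] (fun ω => ⨆ k, ENNReal.ofReal (g k ω)) := by
  letI := mm
  exact Measurable.iSup fun k => (h k).ennreal_ofReal


lemma measurable_condExpENN (P : Measure Ω) (mm : MeasurableSpace Ω) (X : Ω → ENNReal) :
    Measurable[mm] (condExpENN P mm X) :=
  measurable_iSup_ofReal fun _ => stronglyMeasurable_condExp.measurable

section Y
variable (X : Ω → ENNReal)

/-- truncation -/
def Y (k : ℕ) : Ω → ℝ := fun ω => (min (X ω) (k : ENNReal)).toReal

variable {X}

lemma Y_nonneg (k : ℕ) (ω : Ω) : 0 ≤ Y X k ω := ENNReal.toReal_nonneg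

lemma Y_le (k : ℕ) (ω : Ω) : Y X k ω ≤ (k : ℝ) := by
  have h1 : min (X ω) (k : ENNReal) ≤ (k : ENNReal) := min_le_right _ _
  have := ENNReal.toReal_mono (by simp : ((k:ℕ) : ENNReal) ≠ ⊤) h1
  simpa [Y] using this

lemma Y_abs_le (k : ℕ) (ω : Ω) : |Y X k ω| ≤ (k : ℝ) := by
  rw [abs_of_nonneg (Y_nonneg k ω)]; exact Y_le k ω

lemma Y_mono (hX : Measurable X) {k l : ℕ} (hkl : k ≤ l) (ω : Ω) : Y X k ω ≤ Y X l ω := by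
  refine ENNReal.toReal_mono ?_ (min_le_min le_rfl (by exact_mod_cast Nat.cast_le.2 hkl))
  exact ne_top_of_le_ne_top (by simp) (min_le_right _ _)

lemma Y_measurable (hX : Measurable X) (k : ℕ) : Measurable (Y X k) :=
  (hX.min measurable_const).ennreal_toReal

lemma Y_integrable (P : Measure Ω) [IsProbabilityMeasure P] (hX : Measurable X) (k : ℕ) :
    Integrable (Y X k) P := by
  refine (integrable_const ((k : ℝ))).mono' (Y_measurable hX k).aestronglyMeasurable ?_
  exact Filter.Eventually.of_forall fun ω => by
    simpa [Real.norm_eq_abs] using Y_abs_le (X := X) k ω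

lemma ofReal_Y (k : ℕ) (ω : Ω) : ENNReal.ofReal (Y X k ω) = min (X ω) (k : ENNReal) :=
  ENNReal.ofReal_toReal (ne_top_of_le_ne_top (by simp) (min_le_right _ _))

lemma iSup_min_nat (x : ENNReal) : ⨆ k : ℕ, min x (k : ENNReal) = x := by
  rw [← inf_iSup_eq]
  simp [ENNReal.iSup_natCast]

end Y

lemma condExpENN_eq (P : Measure Ω) (mm : MeasurableSpace Ω) (X : Ω → ENNReal) (ω : Ω) :
    condExpENN P mm X ω = ⨆ k : ℕ, ENNReal.ofReal ((P[Y X k|mm]) ω) := rfl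

lemma condexpY_nonneg (P : Measure Ω) [IsProbabilityMeasure P] (mm : MeasurableSpace Ω)
    {X : Ω → ENNReal} (k : ℕ) : 0 ≤ᵐ[P] P[Y X k|mm] :=
  condExp_nonneg (Filter.Eventually.of_forall fun ω => Y_nonneg k ω)

lemma condexpY_mono (P : Measure Ω) [IsProbabilityMeasure P] (mm : MeasurableSpace Ω)
    {X : Ω → ENNReal} (hX : Measurable[m] X) {k l : ℕ} (hkl : k ≤ l) :
    P[Y X k|mm] ≤ᵐ[P] P[Y X l|mm] :=
  condExp_mono (Y_integrable P hX k) (Y_integrable P hX l)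
    (Filter.Eventually.of_forall fun ω => Y_mono hX hkl ω)

lemma setLintegral_condExpENN (P : Measure Ω) [IsProbabilityMeasure P]
    {mm : MeasurableSpace Ω} (hmm : mm ≤ m) {X : Ω → ENNReal} (hX : Measurable[m] X)
    {s : Set Ω} (hs : MeasurableSet[mm] s) :
    ∫⁻ ω in s, condExpENN P mm X ω ∂P = ∫⁻ ω in s, X ω ∂P := by
  letI : MeasurableSpace Ω := m
  have hsm : MeasurableSet[m] s := hmm s hs
  have hg : ∀ k : ℕ, Measurable[m] (P[Y X k|mm]) :=
    fun k => (stronglyMeasurable_condExp.mono hmm).measurable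
  have hmono : ∀ᵐ ω ∂P, Monotone fun k : ℕ => ENNReal.ofReal ((P[Y X k|mm]) ω) := by
    have := ae_all_iff.2 fun k : ℕ => condexpY_mono P mm hX (Nat.le_succ k)
    filter_upwards [this] with ω hω
    exact monotone_nat_of_le_succ fun k => ENNReal.ofReal_le_ofReal (hω k)
  have h1 : ∫⁻ ω in s, condExpENN P mm X ω ∂P
      = ⨆ k : ℕ, ∫⁻ ω in s, ENNReal.ofReal ((P[Y X k|mm]) ω) ∂P := by
    simp_rw [condExpENN_eq]
    exact lintegral_iSup' (fun k => ((hg k).ennreal_ofReal).aemeasurable)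
      (ae_restrict_of_ae hmono)
  have h2 : ∀ k : ℕ, ∫⁻ ω in s, ENNReal.ofReal ((P[Y X k|mm]) ω) ∂P
      = ∫⁻ ω in s, min (X ω) (k : ENNReal) ∂P := by
    intro k
    have hcint : Integrable (P[Y X k|mm]) P := integrable_condExp
    have hcinton : IntegrableOn (P[Y X k|mm]) s P := hcint.integrableOn
    have hyon : IntegrableOn (Y X k) s P := (Y_integrable (m := m) P hX k).integrableOn
    have ha : ENNReal.ofReal (∫ ω in s, (P[Y X k|mm]) ω ∂P)
        = ∫⁻ ω in s, ENNReal.ofReal ((P[Y X k|mm]) ω) ∂P :=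
      ofReal_integral' hcinton (ae_restrict_of_ae (condexpY_nonneg P mm k))
    have hb : ENNReal.ofReal (∫ ω in s, Y X k ω ∂P) = ∫⁻ ω in s, ENNReal.ofReal (Y X k ω) ∂P :=
      ofReal_integral' hyon
        (ae_restrict_of_ae (Filter.Eventually.of_forall fun ω => Y_nonneg k ω))
    rw [← ha, setIntegral_condExp hmm (Y_integrable P hX k) hs, hb]
    refine lintegral_congr fun ω => ?_
    exact ofReal_Y k ω
  rw [h1]
  simp_rw [h2]
  rw [← lintegral_iSup' (fun k => ((hX.min measurable_const).aemeasurable).restrict)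
    (ae_restrict_of_ae (Filter.Eventually.of_forall fun ω =>
      fun k l hkl => min_le_min le_rfl (by exact_mod_cast Nat.cast_le.2 hkl)))]
  refine lintegral_congr fun ω => ?_
  exact iSup_min_nat (X ω)

lemma condExpENN_restrict (P : Measure Ω) [IsProbabilityMeasure P]
    {mm : MeasurableSpace Ω} (hmm : mm ≤ m) {X : Ω → ENNReal} (hX : Measurable[m] X)
    {A : Set Ω} (hA : MeasurableSet[mm] A) (hfin : ∫⁻ ω in A, X ω ∂P ≠ ⊤) :
    ∀ᵐ ω ∂P, ω ∈ A → condExpENN P mm X ω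
      = ENNReal.ofReal ((P[fun ω' => (A.indicator X ω').toReal|mm]) ω) := by
  letI : MeasurableSpace Ω := m
  have hAm : MeasurableSet[m] A := hmm A hA
  set u : Ω → ℝ := fun ω' => (A.indicator X ω').toReal with hu
  have hXA_meas : Measurable[m] (A.indicator X) := hX.indicator hAm
  have huint : Integrable u P := integrable_toReal_of_lintegral_ne_top hXA_meas.aemeasurable
    (by rwa [lintegral_indicator hAm])
  have hu_nonneg : 0 ≤ᵐ[P] u := Filter.Eventually.of_forall fun ω => ENNReal.toReal_nonneg
  set w : Ω → ℝ := P[u|mm] with hw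
  have hwint : Integrable w P := integrable_condExp
  have hw_nonneg : 0 ≤ᵐ[P] w := condExp_nonneg hu_nonneg
  have hwmeas : Measurable[m] w := (stronglyMeasurable_condExp.mono hmm).measurable
  have hXfin : ∀ᵐ ω ∂P.restrict A, X ω < ⊤ := ae_lt_top' hX.aemeasurable hfin
  have hXfin' : ∀ᵐ ω ∂P, ω ∈ A → X ω < ⊤ := (ae_restrict_iff' hAm).1 hXfin
  have hvle : ∀ k : ℕ, A.indicator (Y X k) ≤ᵐ[P] u := by
    intro k
    filter_upwards [hXfin'] with ω hω
    by_cases hmem : ω ∈ A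
    · rw [Set.indicator_of_mem hmem, hu]
      simp only [Set.indicator_of_mem hmem]
      exact ENNReal.toReal_mono (hω hmem).ne (min_le_left _ _)
    · rw [Set.indicator_of_notMem hmem, hu]
      simp only [Set.indicator_of_notMem hmem]
      simp
  have hvint : ∀ k : ℕ, Integrable (A.indicator (Y X k)) P := fun k =>
    (Y_integrable P hX k).indicator hAm
  have hind : ∀ k : ℕ, P[A.indicator (Y X k)|mm] =ᵐ[P] A.indicator (P[Y X k|mm]) :=
    fun k => condExp_indicator (Y_integrable P hX k) hA
  have hcmono : ∀ k : ℕ, P[A.indicator (Y X k)|mm] ≤ᵐ[P] w :=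
    fun k => condExp_mono (hvint k) huint (hvle k)
  have hle1 : (fun ω => condExpENN P mm X ω) ≤ᵐ[P.restrict A] fun ω => ENNReal.ofReal (w ω) := by
    have hall : ∀ᵐ ω ∂P, ∀ k : ℕ, (P[A.indicator (Y X k)|mm]) ω
        = A.indicator (P[Y X k|mm]) ω ∧ (P[A.indicator (Y X k)|mm]) ω ≤ w ω :=
      ae_all_iff.2 fun k => ((hind k).and (hcmono k))
    rw [Filter.EventuallyLE, ae_restrict_iff' hAm]
    filter_upwards [hall] with ω hω hmem
    rw [condExpENN_eq]
    refine iSup_le fun k => ?_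
    have h1 : (P[Y X k|mm]) ω = (P[A.indicator (Y X k)|mm]) ω := by
      rw [(hω k).1, Set.indicator_of_mem hmem]
    rw [h1]
    exact ENNReal.ofReal_le_ofReal (hω k).2
  have hAeq : ∫⁻ ω in A, ENNReal.ofReal (w ω) ∂P = ∫⁻ ω in A, X ω ∂P := by
    rw [← ofReal_integral' hwint.integrableOn (ae_restrict_of_ae hw_nonneg),
        setIntegral_condExp hmm huint hA,
        ofReal_integral' huint.integrableOn (ae_restrict_of_ae hu_nonneg)]
    refine lintegral_congr_ae ?_
    rw [Filter.EventuallyEq, ae_restrict_iff' hAm]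
    filter_upwards [hXfin'] with ω h1 hmem
    rw [hu]
    simp only [Set.indicator_of_mem hmem]
    exact ENNReal.ofReal_toReal (h1 hmem).ne
  have hZeq : ∫⁻ ω in A, condExpENN P mm X ω ∂P = ∫⁻ ω in A, X ω ∂P :=
    setLintegral_condExpENN P hmm hX hA
  have hfinal : (fun ω => condExpENN P mm X ω) =ᵐ[P.restrict A] fun ω => ENNReal.ofReal (w ω) :=
    ae_eq_of_ae_le_of_lintegral_le hle1 (by rw [hZeq]; exact hfin)
      (hwmeas.ennreal_ofReal).aemeasurable (le_of_eq (by rw [hAeq, hZeq]))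
  exact ae_imp_of_ae_restrict hfinal


lemma measurableSet_le_const {mm : MeasurableSpace Ω} {Z : Ω → ENNReal}
    (hZ : Measurable[mm] Z) (c : ENNReal) : MeasurableSet[mm] {ω | Z ω ≤ c} := by
  letI := mm
  exact measurableSet_le hZ measurable_const


end Helpers

/-- **Generalised backwards martingale convergence theorem.** For a nonincreasing sequence
of sub-σ-algebras `𝓕₀ ⊇ 𝓕₋₁ ⊇ ⋯` with intersection `𝓕₋∞ = ⨅ k, 𝓕₋ₖ`, and a `[0,∞]`-valued
random variable `X`, one has `E[X | 𝓕₋ₙ] → E[X | 𝓕₋∞]` a.s. -/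
theorem generalised_backwards_martingale_convergence
    (P : Measure Ω) [IsProbabilityMeasure P]
    (ℱ : ℕ → MeasurableSpace Ω) (hle : ∀ n, ℱ n ≤ m) (hanti : ∀ n, ℱ (n + 1) ≤ ℱ n)
    (X : Ω → ENNReal) (hX : Measurable X) :
    ∀ᵐ ω ∂P, Filter.Tendsto (fun n => condExpENN P (ℱ n) X ω) Filter.atTop
      (nhds (condExpENN P (⨅ k, ℱ k) X ω)) := by
  have hant : Antitone ℱ := antitone_nat_of_succ_le hanti
  have hminfle : (⨅ k, ℱ k) ≤ m := le_trans (iInf_le ℱ 0) (hle 0)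
  set Z : Ω → ENNReal := condExpENN P (⨅ k, ℱ k) X with hZdef
  have hliminf : ∀ᵐ ω ∂P, Z ω ≤ liminf (fun n => condExpENN P (ℱ n) X ω) atTop := by
    have hk : ∀ k : ℕ, ∀ᵐ ω ∂P, Tendsto (fun q => (P[Y X k|ℱ q]) ω) atTop
        (𝓝 ((P[Y X k|⨅ j, ℱ j]) ω)) :=
      fun k => ae_tendsto_condExp P ℱ hle hant (Y_integrable P hX k)
    rw [← ae_all_iff] at hk
    filter_upwards [hk] with ω hω
    rw [hZdef, condExpENN_eq]
    refine iSup_le fun k => ?_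
    have h1 : Tendsto (fun q => ENNReal.ofReal ((P[Y X k|ℱ q]) ω)) atTop
        (𝓝 (ENNReal.ofReal ((P[Y X k|⨅ j, ℱ j]) ω))) :=
      (ENNReal.continuous_ofReal.tendsto _).comp (hω k)
    rw [← h1.liminf_eq]
    refine liminf_le_liminf (Filter.Eventually.of_forall fun q => ?_)
    exact le_iSup (fun j : ℕ => ENNReal.ofReal ((P[Y X j|ℱ q]) ω)) k
  have hfinpart : ∀ c : ℕ, ∀ᵐ ω ∂P, Z ω ≤ (c : ENNReal) →
      Tendsto (fun n => condExpENN P (ℱ n) X ω) atTop (𝓝 (Z ω)) := by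
    intro c
    set A : Set Ω := {ω | Z ω ≤ (c : ENNReal)} with hA
    have hZmeas : Measurable[⨅ k, ℱ k] Z := measurable_condExpENN P _ X
    have hAmeas : MeasurableSet[⨅ k, ℱ k] A := measurableSet_le_const hZmeas _
    have hAn : ∀ n, MeasurableSet[ℱ n] A := fun n => (iInf_le ℱ n) A hAmeas
    have hAm : MeasurableSet A := hminfle A hAmeas
    have hfinA : ∫⁻ ω in A, X ω ∂P ≠ ⊤ := by
      rw [← setLintegral_condExpENN P hminfle hX hAmeas]
      have h1 : ∫⁻ ω in A, Z ω ∂P ≤ ∫⁻ ω in A, (c : ENNReal) ∂P := by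
        refine lintegral_mono_ae ?_
        rw [ae_restrict_iff' hAm]
        exact Filter.Eventually.of_forall fun ω hω => hω
      rw [setLIntegral_const A (c : ENNReal)] at h1
      have h2 : (c : ENNReal) * P A < ⊤ :=
        ENNReal.mul_lt_top (by simp) (measure_lt_top P A)
      exact (lt_of_le_of_lt h1 h2).ne
    set u : Ω → ℝ := fun ω' => (A.indicator X ω').toReal with hu
    have huint : Integrable u P :=
      integrable_toReal_of_lintegral_ne_top (hX.indicator hAm).aemeasurable
        (by rwa [lintegral_indicator hAm])
    have hinf := condExpENN_restrict P hminfle hX hAmeas hfinA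
    have hn : ∀ n, ∀ᵐ ω ∂P, ω ∈ A → condExpENN P (ℱ n) X ω
        = ENNReal.ofReal ((P[u|ℱ n]) ω) :=
      fun n => condExpENN_restrict P (hle n) hX (hAn n) hfinA
    rw [← ae_all_iff] at hn
    have htend := ae_tendsto_condExp P ℱ hle hant huint
    filter_upwards [hinf, hn, htend] with ω h1 h2 h3 hmem
    have hmem' : ω ∈ A := hmem
    rw [show Z ω = ENNReal.ofReal ((P[u|⨅ k, ℱ k]) ω) from h1 hmem']
    exact ((ENNReal.continuous_ofReal.tendsto _).comp h3).congr
      fun n => (h2 n hmem').symm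
  filter_upwards [hliminf, ae_all_iff.2 hfinpart] with ω h1 h2
  by_cases hZω : Z ω = ⊤
  · rw [hZω] at h1
    have hlim : liminf (fun n => condExpENN P (ℱ n) X ω) atTop = ⊤ := top_le_iff.1 h1
    have hlimsup : limsup (fun n => condExpENN P (ℱ n) X ω) atTop = ⊤ :=
      top_le_iff.1 (hlim ▸ liminf_le_limsup)
    rw [hZω]
    exact tendsto_of_liminf_eq_limsup hlim hlimsup
  · have hc : Z ω ≤ ((⌈(Z ω).toReal⌉₊ : ℕ) : ENNReal) := by
      calc Z ω = ENNReal.ofReal (Z ω).toReal := (ENNReal.ofReal_toReal hZω).symm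
        _ ≤ ENNReal.ofReal ((⌈(Z ω).toReal⌉₊ : ℝ)) := ENNReal.ofReal_le_ofReal (Nat.le_ceil _)
        _ = _ := by rw [ENNReal.ofReal_natCast]
    exact h2 _ hc

end EZSDU
end
end

section
/- Generalised Hunt lemma: Let (Ω, 𝓕, P) be a probability space and (X_n)_{n∈ℕ} a nondecreasing sequence of [0,∞]-valued random variables with X_n → X P-a.s. Let 𝓕 ⊇ 𝓕_0 ⊇ 𝓕_{-1} ⊇ 𝓕_{-2} ⊇ ⋯ be a nonincreasing sequence of sub-σ-algebras and 𝓕_{-∞} := ⋂_{k≥1} 𝓕_{-k}. Then E[X_n | 𝓕_{-n}] → E[X | 𝓕_{-∞}] P-almost surely as n → ∞. -/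
open MeasureTheory Filter
open scoped ENNReal NNReal Topology

noncomputable section

namespace EZSDU

variable {Ω : Type*} {m : MeasurableSpace Ω}

private lemma count_upcrossings {a b : ℝ} (hab : a < b) (u : ℕ → Ω → ℝ) (ω : Ω)
    (v w : ℕ → ℕ) :
    ∀ K : ℕ, (∀ j ≤ K, v j < w j) → (∀ j < K, w j < v (j + 1)) →
      (∀ j ≤ K, u (v j) ω < a) → (∀ j ≤ K, b < u (w j) ω) →
      K ≤ upcrossingsBefore a b u (w K + 1) ω := by
  intro K
  induction K with
  | zero => intro _ _ _ _; exact Nat.zero_le _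
  | succ K ih =>
    intro h1 h2 h3 h4
    have hK := ih (fun j hj => h1 j (hj.trans (Nat.le_succ _)))
      (fun j hj => h2 j (hj.trans (Nat.lt_succ_self _)))
      (fun j hj => h3 j (hj.trans (Nat.le_succ _)))
      (fun j hj => h4 j (hj.trans (Nat.le_succ _)))
    have hlt := upcrossingsBefore_lt_of_exists_upcrossing (f := u) (ω := ω) hab
      (N := w K + 1) (N₁ := v (K + 1)) (N₂ := w (K + 1))
      (h2 K (Nat.lt_succ_self _)) (h3 (K + 1) le_rfl)
      ((h1 (K + 1) le_rfl).le) (h4 (K + 1) le_rfl)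
    omega

lemma bad_set_ae (P : Measure Ω) [IsProbabilityMeasure P]
    (ℱ : ℕ → MeasurableSpace Ω) (hle : ∀ n, ℱ n ≤ m) (hanti : Antitone ℱ)
    {g : Ω → ℝ} (hg : Integrable g P) {a b : ℝ} (hab : a < b) :
    ∀ᵐ ω ∂P, ¬((∃ᶠ n in atTop, (P[g|ℱ n]) ω < a) ∧ (∃ᶠ n in atTop, b < (P[g|ℱ n]) ω)) := by
  set f : ℕ → Ω → ℝ := fun n => P[g|ℱ n] with hf
  let 𝒢 : ℕ → Filtration ℕ m := fun N =>
    ⟨fun i => ℱ (N - i), fun i j hij => hanti (Nat.sub_le_sub_left hij N), fun _ => hle _⟩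
  have hmart : ∀ N, Martingale (fun i => P[g|ℱ (N - i)]) (𝒢 N) P := fun N =>
    ⟨fun _ => stronglyMeasurable_condExp, fun i j hij =>
      condExp_condExp_of_le (hanti (Nat.sub_le_sub_left hij N)) (hle _)⟩
  set U : ℕ → Ω → ℕ := fun N => upcrossingsBefore a b (fun i => f (N - i)) (N + 1) with hU
  have hmeasU : ∀ N, Measurable (fun ω => (U N ω : ℝ≥0∞)) := fun N =>
    measurable_from_top.comp ((hmart N).stronglyAdapted.measurable_upcrossingsBefore hab)
  set C : ℝ := (∫ ω, |g ω| ∂P + |a|) / (b - a) with hC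
  have hintU : ∀ N, ∫⁻ ω, (U N ω : ℝ≥0∞) ∂P ≤ ENNReal.ofReal C := by
    intro N
    have hInt : Integrable (fun ω => (U N ω : ℝ)) P :=
      (hmart N).stronglyAdapted.integrable_upcrossingsBefore hab
    have h1 : ∫⁻ ω, (U N ω : ℝ≥0∞) ∂P = ENNReal.ofReal (∫ ω, (U N ω : ℝ) ∂P) := by
      rw [ofReal_integral_eq_lintegral_ofReal hInt
        (Eventually.of_forall fun ω => Nat.cast_nonneg _)]
      simp_rw [ENNReal.ofReal_natCast]
    rw [h1]
    refine ENNReal.ofReal_le_ofReal ?_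
    have hDoob := (hmart N).submartingale.mul_integral_upcrossingsBefore_le_integral_pos_part
      a b (N + 1)
    have hzero : N - (N + 1) = 0 := by omega
    have hbd : ∫ ω, ((fun i => f (N - i)) (N + 1) ω - a)⁺ ∂P ≤ ∫ ω, |g ω| ∂P + |a| := by
      have hle1 : ∀ ω, ((fun i => f (N - i)) (N + 1) ω - a)⁺ ≤ |f 0 ω| + |a| := by
        intro ω
        simp only [hzero]
        refine (max_le (le_trans (sub_le_sub_right (le_abs_self _) a) ?_)
          (add_nonneg (abs_nonneg _) (abs_nonneg _)) : max (f 0 ω - a) 0 ≤ _)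
        have : -a ≤ |a| := neg_le_abs a
        linarith
      calc ∫ ω, ((fun i => f (N - i)) (N + 1) ω - a)⁺ ∂P
          ≤ ∫ ω, (|f 0 ω| + |a|) ∂P := by
            exact integral_mono ((((hmart N).integrable (N + 1))).sub
              (integrable_const a)).pos_part (integrable_condExp.abs.add (integrable_const _))
              hle1
        _ = ∫ ω, |f 0 ω| ∂P + |a| := by
            rw [integral_add integrable_condExp.abs (integrable_const _), integral_const]
            simp
            rfl
        _ ≤ ∫ ω, |g ω| ∂P + |a| := by
            have := integral_abs_condExp_le (μ := P) (m := ℱ 0) g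
            linarith
    rw [hC, le_div_iff₀ (sub_pos.2 hab), mul_comm]
    exact le_trans hDoob hbd
  have hliminf : ∀ᵐ ω ∂P, liminf (fun N => (U N ω : ℝ≥0∞)) atTop < ∞ := by
    refine ae_lt_top (Measurable.liminf hmeasU) ?_
    have h1 : ∫⁻ ω, liminf (fun N => (U N ω : ℝ≥0∞)) atTop ∂P ≤ ENNReal.ofReal C :=
      le_trans (lintegral_liminf_le hmeasU)
        (liminf_le_of_frequently_le (Frequently.of_forall hintU))
    exact (h1.trans_lt ENNReal.ofReal_lt_top).ne
  filter_upwards [hliminf] with ω hω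
  rintro ⟨h₁, h₂⟩
  rw [frequently_atTop] at h₁ h₂
  have ha' : ∀ s : ℕ, ∃ p, s < p ∧ f p ω < a := by
    intro s; obtain ⟨p, hp, hp'⟩ := h₁ (s + 1); exact ⟨p, by omega, hp'⟩
  have hb' : ∀ s : ℕ, ∃ q, s < q ∧ b < f q ω := by
    intro s; obtain ⟨q, hq, hq'⟩ := h₂ (s + 1); exact ⟨q, by omega, hq'⟩
  choose Q hQ1 hQ2 using hb'
  choose Pp hP1 hP2 using ha'
  set z : ℕ → ℕ × ℕ := fun j =>
    Nat.rec (Q 0, Pp (Q 0)) (fun _ prev => (Q prev.2, Pp (Q prev.2))) j with hz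
  have hz1 : ∀ j, (z j).1 < (z j).2 := by intro j; cases j <;> exact hP1 _
  have hzb : ∀ j, b < f (z j).1 ω := by intro j; cases j <;> exact hQ2 _
  have hza : ∀ j, f (z j).2 ω < a := by intro j; cases j <;> exact hP2 _
  have hz2 : ∀ j, (z j).2 < (z (j + 1)).1 := fun j => hQ1 _
  have hz2mono : StrictMono fun j => (z j).2 :=
    strictMono_nat_of_lt_succ fun j => (hz2 j).trans (hz1 (j + 1))
  -- liminf is infinite : contradiction
  have htop : ∀ K : ℕ, (K : ℝ≥0∞) ≤ liminf (fun N => (U N ω : ℝ≥0∞)) atTop := by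
    intro K
    refine le_liminf_of_le (by isBoundedDefault) ?_
    filter_upwards [eventually_ge_atTop ((z K).2)] with N hN
    set vv : ℕ → ℕ := fun j => N - (z (K - j)).2 with hvv
    set ww : ℕ → ℕ := fun j => N - (z (K - j)).1 with hww
    have hbound : ∀ j ≤ K, (z (K - j)).2 ≤ N := fun j _ =>
      le_trans (hz2mono.monotone (Nat.sub_le K j)) hN
    have hcount := count_upcrossings hab (fun i => f (N - i)) ω vv ww K
      (fun j hj => by
        have h1 := hz1 (K - j); have h2 := hbound j hj
        simp only [hvv, hww]; omega)
      (fun j hj => by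
        have e : K - j - 1 + 1 = K - j := by omega
        have h1 := hz2 (K - j - 1)
        rw [e] at h1
        have h2 := hbound j hj.le
        have e2 : K - (j + 1) = K - j - 1 := by omega
        have h4 : (z (K - j)).1 ≤ N := le_trans (hz1 _).le h2
        simp only [hvv, hww, e2]
        have h3 := hz1 (K - j - 1)
        omega)
      (fun j hj => by
        have h2 := hbound j hj
        simp only [hvv, Nat.sub_sub_self h2]
        exact hza _)
      (fun j hj => by
        have h2 := hbound j hj
        have h3 : (z (K - j)).1 ≤ N := le_trans (hz1 _).le h2
        simp only [hww, Nat.sub_sub_self h3]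
        exact hzb _)
    have hmono := upcrossingsBefore_mono (f := fun i => f (N - i)) hab
      (show ww K + 1 ≤ N + 1 by
        have : (z (K - K)).1 ≤ N := le_trans (hz1 _).le (hbound K le_rfl)
        simp only [hww]; omega) ω
    have : K ≤ U N ω := le_trans hcount hmono
    exact_mod_cast this
  have h5 : (⊤ : ℝ≥0∞) ≤ liminf (fun N => (U N ω : ℝ≥0∞)) atTop := by
    rw [← ENNReal.iSup_natCast]
    exact iSup_le htop
  exact absurd hω (not_lt.2 h5)


lemma backward_levy (P : Measure Ω) [IsProbabilityMeasure P]
    (ℱ : ℕ → MeasurableSpace Ω) (hle : ∀ n, ℱ n ≤ m) (hanti : Antitone ℱ)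
    {g : Ω → ℝ} (hg : Integrable g P) :
    ∀ᵐ ω ∂P, Tendsto (fun n => (P[g|ℱ n]) ω) atTop (𝓝 ((P[g|⨅ k, ℱ k]) ω)) := by
  have h𝒢 : (⨅ k, ℱ k) ≤ m := (iInf_le ℱ 0).trans (hle 0)
  set f : ℕ → Ω → ℝ := fun n => P[g|ℱ n] with hf
  have hgsnorm : eLpNorm g 1 P ≠ ∞ := (memLp_one_iff_integrable.2 hg).eLpNorm_lt_top.ne
  have hbdd : ∀ n, eLpNorm (f n) 1 P ≤ (eLpNorm g 1 P).toNNReal := by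
    intro n
    rw [ENNReal.coe_toNNReal hgsnorm]
    exact eLpNorm_one_condExp_le_eLpNorm _
  have hliminf := ae_bdd_liminf_atTop_of_eLpNorm_bdd one_ne_zero
    (fun n => (stronglyMeasurable_condExp.mono (hle n)).measurable) hbdd
  have hnofreq : ∀ᵐ ω ∂P, ∀ a b : ℚ, a < b →
      ¬((∃ᶠ n in atTop, f n ω < a) ∧ (∃ᶠ n in atTop, (b : ℝ) < f n ω)) := by
    simp only [ae_all_iff, eventually_imp_distrib_left]
    intro a b hab
    exact bad_set_ae P ℱ hle hanti hg (by exact_mod_cast hab)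
  have hex : ∀ᵐ ω ∂P, ∃ c, Tendsto (fun n => f n ω) atTop (𝓝 c) := by
    filter_upwards [hnofreq, hliminf] with ω h₁ h₂
    by_cases h : IsBoundedUnder (· ≤ ·) atTop fun n => |f n ω|
    · rw [isBoundedUnder_le_abs] at h
      refine tendsto_of_no_upcrossings Rat.denseRange_cast ?_ h.1 h.2
      rintro _ ⟨a, rfl⟩ _ ⟨b, rfl⟩ hab
      exact h₁ a b (Rat.cast_lt.1 hab)
    · obtain ⟨a, b, hab, h₃, h₄⟩ := ENNReal.exists_upcrossings_of_not_bounded_under h₂.ne h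
      exact absurd ⟨h₃, h₄⟩ (h₁ a b hab)
  set L : Ω → ℝ := fun ω => liminf (fun n => f n ω) atTop with hL
  have hLtend : ∀ᵐ ω ∂P, Tendsto (fun n => f n ω) atTop (𝓝 (L ω)) := by
    filter_upwards [hex] with ω hω
    obtain ⟨c, hc⟩ := hω
    have : L ω = c := hc.liminf_eq
    rwa [this]
  have hLmeasM : ∀ M, Measurable[ℱ M] L := by
    intro M
    have hLe : L = fun ω => liminf (fun n => f (n + M) ω) atTop := by
      funext ω
      rw [hL]
      exact (liminf_nat_add _ M).symm
    rw [hLe]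
    exact Measurable.liminf fun n =>
      (stronglyMeasurable_condExp.mono (hanti (Nat.le_add_left M n))).measurable
  have hLmeas : Measurable[⨅ k, ℱ k] L := by
    intro s hs
    exact MeasurableSpace.measurableSet_iInf.2 fun k => hLmeasM k hs
  have hLint : Integrable L P := by
    refine ⟨(hLmeas.mono h𝒢 le_rfl).aestronglyMeasurable, ?_⟩
    have h1 : ∀ᵐ ω ∂P, (‖L ω‖₊ : ℝ≥0∞) ≤ liminf (fun n => (‖f n ω‖₊ : ℝ≥0∞)) atTop := by
      filter_upwards [hLtend] with ω hω
      have h2 : Tendsto (fun n => (‖f n ω‖₊ : ℝ≥0∞)) atTop (𝓝 (‖L ω‖₊ : ℝ≥0∞)) :=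
        ENNReal.tendsto_coe.2 hω.nnnorm
      exact h2.liminf_eq.ge
    have h3 : ∫⁻ ω, (‖L ω‖₊ : ℝ≥0∞) ∂P ≤ eLpNorm g 1 P := by
      refine le_trans (lintegral_mono_ae h1) ?_
      refine le_trans (lintegral_liminf_le fun n =>
        ((stronglyMeasurable_condExp.mono (hle n)).measurable).nnnorm.coe_nnreal_ennreal) ?_
      refine liminf_le_of_frequently_le (Frequently.of_forall fun n => ?_)
      rw [show ∫⁻ a, (‖f n a‖₊ : ℝ≥0∞) ∂P = eLpNorm (f n) 1 P by rw [eLpNorm_one_eq_lintegral_enorm]; rfl]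
      exact eLpNorm_one_condExp_le_eLpNorm _
    show (∫⁻ ω, (‖L ω‖₊ : ℝ≥0∞) ∂P) < ∞
    exact h3.trans_lt (memLp_one_iff_integrable.2 hg).eLpNorm_lt_top
  have hunif := hg.uniformIntegrable_condExp hle
  have hmeasae : ∀ n, AEStronglyMeasurable (f n) P := fun n =>
    (stronglyMeasurable_condExp.mono (hle n)).aestronglyMeasurable
  have hL1 : Tendsto (fun n => eLpNorm (f n - L) 1 P) atTop (𝓝 0) :=
    tendsto_Lp_finite_of_tendstoInMeasure le_rfl ENNReal.one_ne_top hmeasae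
      (memLp_one_iff_integrable.2 hLint) hunif.2.1
      (tendstoInMeasure_of_tendsto_ae hmeasae hLtend)
  have heq : L =ᵐ[P] P[g|⨅ k, ℱ k] := by
    refine ae_eq_condExp_of_forall_setIntegral_eq h𝒢 hg
      (fun s _ _ => hLint.integrableOn) (fun s hs _ => ?_)
      (hLmeas.stronglyMeasurable.aestronglyMeasurable)
    have h1 : Tendsto (fun n => ∫ ω in s, f n ω ∂P) atTop (𝓝 (∫ ω in s, L ω ∂P)) :=
      tendsto_setIntegral_of_L1' L hLint.aestronglyMeasurable (Eventually.of_forall fun n => integrable_condExp) hL1 s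
    have h2 : (fun n => ∫ ω in s, f n ω ∂P) = fun _ => ∫ ω in s, g ω ∂P := by
      funext n
      exact setIntegral_condExp (hle n) hg ((iInf_le ℱ n : (⨅ k, ℱ k) ≤ ℱ n) s hs)
    rw [h2] at h1
    exact (tendsto_nhds_unique tendsto_const_nhds h1).symm
  filter_upwards [hLtend, heq] with ω h1 h2
  rwa [h2] at h1


/-- monotone convergence for conditional expectation -/
lemma tendsto_condexp_of_monotone {Ω : Type*} {mm m : MeasurableSpace Ω} (hmm : mm ≤ m)
    (P : Measure Ω) [IsProbabilityMeasure P]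
    (φ : ℕ → Ω → ℝ) (φlim : Ω → ℝ) (hint : ∀ k, Integrable (φ k) P)
    (hlimint : Integrable φlim P)
    (hmono : ∀ᵐ ω ∂P, Monotone fun k => φ k ω)
    (htend : ∀ᵐ ω ∂P, Tendsto (fun k => φ k ω) atTop (𝓝 (φlim ω))) :
    ∀ᵐ ω ∂P, Tendsto (fun k => (P[φ k|mm]) ω) atTop (𝓝 ((P[φlim|mm]) ω)) := by
  have hφle : ∀ k, φ k ≤ᵐ[P] φlim := by
    intro k
    filter_upwards [hmono, htend] with ω h1 h2
    exact h1.ge_of_tendsto h2 k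
  have hcsucc : ∀ᵐ ω ∂P, ∀ k, (P[φ k|mm]) ω ≤ (P[φ (k + 1)|mm]) ω :=
    ae_all_iff.2 fun k => condExp_mono (hint k) (hint (k + 1))
      (by filter_upwards [hmono] with ω h using h (Nat.le_succ k))
  have hub : ∀ᵐ ω ∂P, ∀ k, (P[φ k|mm]) ω ≤ (P[φlim|mm]) ω :=
    ae_all_iff.2 fun k => condExp_mono (hint k) hlimint (hφle k)
  set V : Ω → ℝ := fun ω => ⨆ k, (P[φ k|mm]) ω with hV
  have hVtend : ∀ᵐ ω ∂P, Tendsto (fun k => (P[φ k|mm]) ω) atTop (𝓝 (V ω)) := by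
    filter_upwards [hcsucc, hub] with ω h1 h2
    exact tendsto_atTop_ciSup (monotone_nat_of_le_succ h1)
      ⟨(P[φlim|mm]) ω, by rintro x ⟨k, rfl⟩; exact h2 k⟩
  have hVsm : StronglyMeasurable[mm] V := by
    letI : MeasurableSpace Ω := mm
    exact (Measurable.iSup fun k =>
      (stronglyMeasurable_condExp (m := mm) (f := φ k) (μ := P)).measurable).stronglyMeasurable
  have hVint : Integrable V P := by
    have hbd : ∀ᵐ ω ∂P, ‖V ω‖ ≤ |(P[φ 0|mm]) ω| + |(P[φlim|mm]) ω| := by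
      filter_upwards [hcsucc, hub] with ω h2 h3
      have hbdd : BddAbove (Set.range fun k => (P[φ k|mm]) ω) :=
        ⟨(P[φlim|mm]) ω, by rintro x ⟨k, rfl⟩; exact h3 k⟩
      have hlow : (P[φ 0|mm]) ω ≤ V ω := le_ciSup hbdd 0
      have hhigh : V ω ≤ (P[φlim|mm]) ω := ciSup_le h3
      rw [Real.norm_eq_abs, abs_le]
      constructor
      · have := neg_abs_le ((P[φ 0|mm]) ω)
        have h5 := abs_nonneg ((P[φlim|mm]) ω)
        linarith
      · have := le_abs_self ((P[φlim|mm]) ω)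
        have h5 := abs_nonneg ((P[φ 0|mm]) ω)
        linarith
    exact Integrable.mono' (integrable_condExp.abs.add integrable_condExp.abs)
      ((hVsm.mono hmm).aestronglyMeasurable) hbd
  have hVeq : V =ᵐ[P] P[φlim|mm] := by
    refine ae_eq_condExp_of_forall_setIntegral_eq hmm hlimint
      (fun s _ _ => hVint.integrableOn) (fun s hs _ => ?_)
      (hVsm.aestronglyMeasurable)
    have h1 : Tendsto (fun k => ∫ ω in s, (P[φ k|mm]) ω ∂P) atTop (𝓝 (∫ ω in s, V ω ∂P)) := by
      refine integral_tendsto_of_tendsto_of_monotone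
        (fun k => integrable_condExp.integrableOn) hVint.integrableOn ?_ ?_
      · exact ae_restrict_of_ae
          (by filter_upwards [hcsucc] with ω h using monotone_nat_of_le_succ h)
      · exact ae_restrict_of_ae hVtend
    have h2 : Tendsto (fun k => ∫ ω in s, φ k ω ∂P) atTop (𝓝 (∫ ω in s, φlim ω ∂P)) :=
      integral_tendsto_of_tendsto_of_monotone (fun k => (hint k).integrableOn)
        hlimint.integrableOn (ae_restrict_of_ae hmono) (ae_restrict_of_ae htend)
    have h3 : ∀ k, ∫ ω in s, (P[φ k|mm]) ω ∂P = ∫ ω in s, φ k ω ∂P := fun k =>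
      setIntegral_condExp hmm (hint k) hs
    simp_rw [h3] at h1
    exact tendsto_nhds_unique h1 h2
  filter_upwards [hVtend, hVeq] with ω h1 h2
  rwa [h2] at h1

section CondExpENNLemmas

variable (P : Measure Ω) [IsProbabilityMeasure P]

lemma trunc_integrable {X : Ω → ENNReal} (hX : Measurable X) (k : ℕ) :
    Integrable (fun ω => (min (X ω) (k : ENNReal)).toReal) P := by
  refine Integrable.mono' (integrable_const (k : ℝ))
    ((hX.min measurable_const).ennreal_toReal).aestronglyMeasurable
    (Eventually.of_forall fun ω => ?_)
  rw [Real.norm_eq_abs, abs_of_nonneg ENNReal.toReal_nonneg]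
  have h1 : (min (X ω) (k : ℝ≥0∞)).toReal ≤ ((k : ℝ≥0∞)).toReal :=
    ENNReal.toReal_mono (ENNReal.natCast_ne_top k) (min_le_right _ _)
  simpa using h1

lemma trunc_ne_top {X : Ω → ENNReal} (k : ℕ) (ω : Ω) : min (X ω) (k : ℝ≥0∞) ≠ ∞ :=
  ne_top_of_le_ne_top (ENNReal.natCast_ne_top k) (min_le_right _ _)

end CondExpENNLemmas

lemma iSup_min_natCast (x : ℝ≥0∞) : ⨆ k : ℕ, min x (k : ℝ≥0∞) = x := by
  refine le_antisymm (iSup_le fun k => min_le_left _ _) ?_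
  by_cases hx : x = ∞
  · have h1 : ⨆ k : ℕ, min x (k : ℝ≥0∞) = ⨆ k : ℕ, (k : ℝ≥0∞) := by
      refine iSup_congr fun k => ?_
      rw [hx, min_eq_right le_top]
    rw [h1, ENNReal.iSup_natCast, hx]
  · obtain ⟨k, hk⟩ := ENNReal.exists_nat_gt hx
    calc x = min x (k : ℝ≥0∞) := (min_eq_left hk.le).symm
    _ ≤ ⨆ k : ℕ, min x (k : ℝ≥0∞) := le_iSup (fun k : ℕ => min x (k : ℝ≥0∞)) k

lemma condExpENN_measurable {Ω : Type*} {mm m : MeasurableSpace Ω}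
    (P : Measure Ω) (X : Ω → ENNReal) :
    Measurable[mm] (condExpENN P mm X) := by
  letI : MeasurableSpace Ω := mm
  exact Measurable.iSup fun k =>
    ((stronglyMeasurable_condExp (m := mm) (μ := P)).measurable).ennreal_ofReal

lemma setLIntegral_condExpENN {Ω : Type*} {mm m : MeasurableSpace Ω} (hmm : mm ≤ m)
    (P : Measure Ω) [IsProbabilityMeasure P]
    {X : Ω → ENNReal} (hX : Measurable X) {s : Set Ω} (hs : MeasurableSet[mm] s) :
    ∫⁻ ω in s, condExpENN P mm X ω ∂P = ∫⁻ ω in s, X ω ∂P := by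
  set τ : ℕ → Ω → ℝ := fun k ω => (min (X ω) (k : ENNReal)).toReal with hτ
  have hτint : ∀ k : ℕ, Integrable (τ k) P := fun k => trunc_integrable P hX k
  have hτnn : ∀ k : ℕ, 0 ≤ᵐ[P] τ k := fun k =>
    Eventually.of_forall fun ω => ENNReal.toReal_nonneg
  have hcnn : ∀ k : ℕ, 0 ≤ᵐ[P] P[τ k|mm] := fun k => condExp_nonneg (hτnn k)
  have hcmono : ∀ k : ℕ, P[τ k|mm] ≤ᵐ[P] P[τ (k + 1)|mm] := by
    intro k
    refine condExp_mono (hτint k) (hτint (k + 1)) (Eventually.of_forall fun ω => ?_)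
    exact ENNReal.toReal_mono (trunc_ne_top (k + 1) ω)
      (min_le_min le_rfl (by exact_mod_cast Nat.cast_le.2 (Nat.le_succ k)))
  have key : ∀ᵐ ω ∂P, Monotone fun k => ENNReal.ofReal ((P[τ k|mm]) ω) := by
    filter_upwards [ae_all_iff.2 hcmono] with ω hω
    exact monotone_nat_of_le_succ fun k => ENNReal.ofReal_le_ofReal (hω k)
  calc ∫⁻ ω in s, condExpENN P mm X ω ∂P
      = ⨆ k, ∫⁻ ω in s, ENNReal.ofReal ((P[τ k|mm]) ω) ∂P := by
        rw [show (fun ω => condExpENN P mm X ω)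
            = fun ω => ⨆ k : ℕ, ENNReal.ofReal ((P[τ k|mm]) ω) from rfl]
        exact lintegral_iSup' (fun k =>
          ((stronglyMeasurable_condExp.mono hmm).measurable.ennreal_ofReal).aemeasurable)
          (ae_restrict_of_ae key)
    _ = ⨆ k, ENNReal.ofReal (∫ ω in s, (P[τ k|mm]) ω ∂P) := by
        refine iSup_congr fun k => ?_
        rw [← ofReal_integral_eq_lintegral_ofReal integrable_condExp.integrableOn
          (ae_restrict_of_ae (hcnn k))]
    _ = ⨆ k, ENNReal.ofReal (∫ ω in s, τ k ω ∂P) := by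
        refine iSup_congr fun k => ?_
        rw [setIntegral_condExp hmm (hτint k) hs]
    _ = ⨆ k : ℕ, ∫⁻ ω in s, min (X ω) (k : ℝ≥0∞) ∂P := by
        refine iSup_congr fun k => ?_
        rw [ofReal_integral_eq_lintegral_ofReal ((hτint k).integrableOn)
          (ae_restrict_of_ae (hτnn k))]
        refine lintegral_congr fun ω => ?_
        exact ENNReal.ofReal_toReal (trunc_ne_top k ω)
    _ = ∫⁻ ω in s, X ω ∂P := by
        rw [← lintegral_iSup (fun k => hX.min measurable_const)
          (fun k l hkl ω => min_le_min le_rfl (Nat.cast_le.2 hkl))]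
        refine lintegral_congr fun ω => iSup_min_natCast (X ω)

lemma condExpENN_mono {Ω : Type*} {mm m : MeasurableSpace Ω}
    (P : Measure Ω) [IsProbabilityMeasure P] {X Y : Ω → ENNReal}
    (hX : Measurable X) (hY : Measurable Y) (hXY : X ≤ᵐ[P] Y) :
    condExpENN P mm X ≤ᵐ[P] condExpENN P mm Y := by
  have h : ∀ k : ℕ, P[fun ω => (min (X ω) (k : ENNReal)).toReal|mm]
      ≤ᵐ[P] P[fun ω => (min (Y ω) (k : ENNReal)).toReal|mm] := by
    intro k
    refine condExp_mono (trunc_integrable P hX k) (trunc_integrable P hY k) ?_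
    filter_upwards [hXY] with ω h
    exact ENNReal.toReal_mono (trunc_ne_top k ω) (min_le_min h le_rfl)
  filter_upwards [ae_all_iff.2 h] with ω hω
  exact iSup_mono fun k => ENNReal.ofReal_le_ofReal (hω k)



def trunc (X : Ω → ENNReal) (k : ℕ) : Ω → ℝ := fun ω => (min (X ω) (k : ENNReal)).toReal

/-- **Generalised Hunt lemma.** Let `(Xₙ)` be a nondecreasing sequence of `[0,∞]`-valued
random variables with `Xₙ → X` a.s., and `𝓕₀ ⊇ 𝓕₋₁ ⊇ ⋯` a nonincreasing sequence of
sub-σ-algebras with intersection `𝓕₋∞ = ⨅ k, 𝓕₋ₖ`. Then `E[Xₙ | 𝓕₋ₙ] → E[X | 𝓕₋∞]` a.s. -/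
theorem generalised_hunt_lemma
    (P : Measure Ω) [IsProbabilityMeasure P]
    (ℱ : ℕ → MeasurableSpace Ω) (hle : ∀ n, ℱ n ≤ m) (hanti : ∀ n, ℱ (n + 1) ≤ ℱ n)
    (X : ℕ → Ω → ENNReal) (hXmeas : ∀ n, Measurable (X n))
    (hmono : ∀ᵐ ω ∂P, ∀ n, X n ω ≤ X (n + 1) ω)
    (Xlim : Ω → ENNReal) (hXlim : Measurable Xlim)
    (htend : ∀ᵐ ω ∂P, Filter.Tendsto (fun n => X n ω) Filter.atTop (nhds (Xlim ω))) :
    ∀ᵐ ω ∂P, Filter.Tendsto (fun n => condExpENN P (ℱ n) (X n) ω) Filter.atTop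
      (nhds (condExpENN P (⨅ k, ℱ k) Xlim ω)) := by
  classical
  have h𝒢 : (⨅ k, ℱ k) ≤ m := (iInf_le ℱ 0).trans (hle 0)
  have h𝒢n : ∀ n, (⨅ k, ℱ k) ≤ ℱ n := fun n => iInf_le ℱ n
  have hantit : Antitone ℱ := antitone_nat_of_succ_le hanti
  have hmono' : ∀ᵐ ω ∂P, ∀ q l, q ≤ l → X q ω ≤ X l ω := by
    filter_upwards [hmono] with ω h
    intro q l hql
    exact monotone_nat_of_le_succ h hql
  have hXle : ∀ᵐ ω ∂P, ∀ n, X n ω ≤ Xlim ω := by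
    filter_upwards [hmono', htend] with ω h1 h2
    intro n
    exact Monotone.ge_of_tendsto (fun a b hab => h1 a b hab) h2 n
  set T : Ω → ENNReal := condExpENN P (⨅ k, ℱ k) Xlim with hT
  set E : ℕ → Ω → ENNReal := fun n => condExpENN P (ℱ n) (X n) with hE
  have hEapp : ∀ n ω, E n ω
      = ⨆ j : ℕ, ENNReal.ofReal ((P[trunc (X n) j|ℱ n]) ω) := fun n ω => rfl
  have hTapp : ∀ ω, T ω = ⨆ k : ℕ, ENNReal.ofReal ((P[trunc Xlim k|(⨅ k, ℱ k)]) ω) := fun ω => rfl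
  -- ===================== LOWER BOUND =====================
  have hback : ∀ q k : ℕ, ∀ᵐ ω ∂P, Tendsto (fun n => (P[trunc (X q) k|ℱ n]) ω) atTop
      (𝓝 ((P[trunc (X q) k|(⨅ k, ℱ k)]) ω)) := fun q k =>
    backward_levy P ℱ hle hantit (trunc_integrable P (hXmeas q) k)
  have hcmp : ∀ q k n : ℕ, q ≤ n → P[trunc (X q) k|ℱ n] ≤ᵐ[P] P[trunc (X n) k|ℱ n] := by
    intro q k n hqn
    refine condExp_mono (trunc_integrable P (hXmeas q) k) (trunc_integrable P (hXmeas n) k) ?_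
    filter_upwards [hmono'] with ω h
    exact ENNReal.toReal_mono (trunc_ne_top (X := X n) k ω) (min_le_min (h q n hqn) le_rfl)
  have hL1 : ∀ q k : ℕ, ∀ᵐ ω ∂P,
      ENNReal.ofReal ((P[trunc (X q) k|(⨅ k, ℱ k)]) ω) ≤ liminf (fun n => E n ω) atTop := by
    intro q k
    have h1 : ∀ᵐ ω ∂P, ∀ n, q ≤ n → (P[trunc (X q) k|ℱ n]) ω ≤ (P[trunc (X n) k|ℱ n]) ω := by
      rw [ae_all_iff]
      intro n
      by_cases hqn : q ≤ n
      · filter_upwards [hcmp q k n hqn] with ω h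
        intro _
        exact h
      · filter_upwards with ω hq
        exact absurd hq hqn
    filter_upwards [hback q k, h1] with ω hω h2
    have h3 : ∀ᶠ n in atTop, ENNReal.ofReal ((P[trunc (X q) k|ℱ n]) ω) ≤ E n ω := by
      filter_upwards [eventually_ge_atTop q] with n hn
      calc ENNReal.ofReal ((P[trunc (X q) k|ℱ n]) ω)
          ≤ ENNReal.ofReal ((P[trunc (X n) k|ℱ n]) ω) := ENNReal.ofReal_le_ofReal (h2 n hn)
        _ ≤ E n ω := by
            rw [hEapp n ω]
            exact le_iSup (fun j => ENNReal.ofReal ((P[trunc (X n) j|ℱ n]) ω)) k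
    have h4 : Tendsto (fun n => ENNReal.ofReal ((P[trunc (X q) k|ℱ n]) ω)) atTop
        (𝓝 (ENNReal.ofReal ((P[trunc (X q) k|(⨅ k, ℱ k)]) ω))) :=
      (ENNReal.continuous_ofReal.tendsto _).comp hω
    calc ENNReal.ofReal ((P[trunc (X q) k|(⨅ k, ℱ k)]) ω)
        = liminf (fun n => ENNReal.ofReal ((P[trunc (X q) k|ℱ n]) ω)) atTop := h4.liminf_eq.symm
      _ ≤ liminf (fun n => E n ω) atTop := liminf_le_liminf h3
  have hL2 : ∀ k : ℕ, ∀ᵐ ω ∂P, Tendsto (fun q => (P[trunc (X q) k|(⨅ k, ℱ k)]) ω) atTop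
      (𝓝 ((P[trunc Xlim k|(⨅ k, ℱ k)]) ω)) := by
    intro k
    refine tendsto_condexp_of_monotone h𝒢 P _ _ (fun q => trunc_integrable P (hXmeas q) k)
      (trunc_integrable P hXlim k) ?_ ?_
    · filter_upwards [hmono'] with ω h
      intro q l hql
      exact ENNReal.toReal_mono (trunc_ne_top (X := X l) k ω) (min_le_min (h q l hql) le_rfl)
    · filter_upwards [htend] with ω h
      have h5 : Tendsto (fun q => min (X q ω) (k : ℝ≥0∞)) atTop
          (𝓝 (min (Xlim ω) (k : ℝ≥0∞))) := h.min tendsto_const_nhds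
      exact (ENNReal.tendsto_toReal (trunc_ne_top (X := Xlim) k ω)).comp h5
  have hlower : ∀ᵐ ω ∂P, T ω ≤ liminf (fun n => E n ω) atTop := by
    have hall1 : ∀ᵐ ω ∂P, ∀ q k : ℕ,
        ENNReal.ofReal ((P[trunc (X q) k|(⨅ k, ℱ k)]) ω) ≤ liminf (fun n => E n ω) atTop :=
      ae_all_iff.2 fun q => ae_all_iff.2 fun k => hL1 q k
    have hall2 : ∀ᵐ ω ∂P, ∀ k : ℕ, Tendsto (fun q => (P[trunc (X q) k|(⨅ k, ℱ k)]) ω) atTop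
        (𝓝 ((P[trunc Xlim k|(⨅ k, ℱ k)]) ω)) := ae_all_iff.2 hL2
    filter_upwards [hall1, hall2] with ω h1 h2
    rw [hTapp ω]
    refine iSup_le fun k => ?_
    have h3 : Tendsto (fun q => ENNReal.ofReal ((P[trunc (X q) k|(⨅ k, ℱ k)]) ω)) atTop
        (𝓝 (ENNReal.ofReal ((P[trunc Xlim k|(⨅ k, ℱ k)]) ω))) :=
      (ENNReal.continuous_ofReal.tendsto _).comp (h2 k)
    exact le_of_tendsto h3 (Eventually.of_forall fun q => h1 q k)
  -- ===================== UPPER BOUND =====================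
  have hEleF : ∀ n : ℕ, ∀ᵐ ω ∂P, E n ω ≤ condExpENN P (ℱ n) Xlim ω := fun n =>
    condExpENN_mono (mm := ℱ n) P (hXmeas n) hXlim
      (by filter_upwards [hXle] with ω h using h n)
  have hTmeas : Measurable[(⨅ k, ℱ k)] T := condExpENN_measurable (mm := (⨅ k, ℱ k)) (m := m) P Xlim
  set A : ℕ → Set Ω := fun j => {ω | T ω ≤ (j : ℝ≥0∞)} with hA
  have hAmeas : ∀ j, MeasurableSet[(⨅ k, ℱ k)] (A j) := fun j => hTmeas measurableSet_Iic
  set gval : ℕ → Ω → ℝ≥0∞ := fun j => (A j).indicator Xlim with hgval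
  set g : ℕ → Ω → ℝ := fun j ω => (gval j ω).toReal with hg
  have hgvalmeas : ∀ j, Measurable (gval j) := fun j => hXlim.indicator (h𝒢 _ (hAmeas j))
  have hgfin : ∀ j, ∫⁻ ω, gval j ω ∂P < ∞ := by
    intro j
    have h1 : ∫⁻ ω, gval j ω ∂P = ∫⁻ ω in A j, Xlim ω ∂P :=
      lintegral_indicator (h𝒢 _ (hAmeas j)) Xlim
    have h2 : ∫⁻ ω in A j, Xlim ω ∂P = ∫⁻ ω in A j, T ω ∂P :=
      (setLIntegral_condExpENN h𝒢 P hXlim (hAmeas j)).symm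
    have h3 : ∫⁻ ω in A j, T ω ∂P ≤ ∫⁻ _ in A j, (j : ℝ≥0∞) ∂P :=
      setLIntegral_mono measurable_const fun ω hω => hω
    rw [h1, h2]
    refine lt_of_le_of_lt h3 ?_
    rw [setLIntegral_const]
    exact ENNReal.mul_lt_top (ENNReal.natCast_lt_top j) (measure_lt_top P _)
  have hgae : ∀ j, ∀ᵐ ω ∂P, gval j ω < ∞ := fun j =>
    ae_lt_top (hgvalmeas j) (hgfin j).ne
  have hgint : ∀ j, Integrable (g j) P := by
    intro j
    refine ⟨((hgvalmeas j).ennreal_toReal).aestronglyMeasurable, ?_⟩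
    show (∫⁻ ω, (‖g j ω‖₊ : ℝ≥0∞) ∂P) < ∞
    have h1 : ∀ ω, (‖g j ω‖₊ : ℝ≥0∞) ≤ gval j ω := by
      intro ω
      show ‖(gval j ω).toReal‖ₑ ≤ gval j ω
      rw [Real.enorm_eq_ofReal ENNReal.toReal_nonneg]
      exact ENNReal.ofReal_toReal_le
    exact lt_of_le_of_lt (lintegral_mono h1) (hgfin j)
  have hkey1 : ∀ j n k : ℕ, ∀ᵐ ω ∂P, ω ∈ A j →
      (P[trunc Xlim k|ℱ n]) ω ≤ (P[g j|ℱ n]) ω := by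
    intro j n k
    have hind : P[(A j).indicator (trunc Xlim k)|ℱ n]
        =ᵐ[P] (A j).indicator (P[trunc Xlim k|ℱ n]) :=
      condExp_indicator (trunc_integrable P hXlim k) (h𝒢n n _ (hAmeas j))
    have hmono2 : P[(A j).indicator (trunc Xlim k)|ℱ n] ≤ᵐ[P] P[g j|ℱ n] := by
      refine condExp_mono ((trunc_integrable P hXlim k).indicator (h𝒢 _ (hAmeas j)))
        (hgint j) ?_
      filter_upwards [hgae j] with ω hω
      by_cases hmem : ω ∈ A j
      · rw [Set.indicator_of_mem hmem]
        have hXfin : Xlim ω ≠ ∞ := by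
          have : gval j ω = Xlim ω := Set.indicator_of_mem hmem _
          rw [this] at hω
          exact hω.ne
        have hgv : gval j ω = Xlim ω := Set.indicator_of_mem hmem _
        show (min (Xlim ω) (k : ℝ≥0∞)).toReal ≤ (gval j ω).toReal
        rw [hgv]
        exact ENNReal.toReal_mono hXfin (min_le_left _ _)
      · rw [Set.indicator_of_notMem hmem]
        show (0 : ℝ) ≤ (gval j ω).toReal
        exact ENNReal.toReal_nonneg
    filter_upwards [hind, hmono2] with ω h1 h2
    intro hmem
    calc (P[trunc Xlim k|ℱ n]) ω
        = ((A j).indicator (P[trunc Xlim k|ℱ n])) ω := (Set.indicator_of_mem hmem _).symm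
      _ = (P[(A j).indicator (trunc Xlim k)|ℱ n]) ω := h1.symm
      _ ≤ (P[g j|ℱ n]) ω := h2
  have hkey2 : ∀ j : ℕ, ∀ᵐ ω ∂P, ω ∈ A j → ENNReal.ofReal ((P[g j|(⨅ k, ℱ k)]) ω) ≤ T ω := by
    intro j
    have htmc : ∀ᵐ ω ∂P, Tendsto (fun k => (P[(A j).indicator (trunc Xlim k)|(⨅ k, ℱ k)]) ω) atTop
        (𝓝 ((P[g j|(⨅ k, ℱ k)]) ω)) := by
      refine tendsto_condexp_of_monotone h𝒢 P _ _
        (fun k => (trunc_integrable P hXlim k).indicator (h𝒢 _ (hAmeas j))) (hgint j) ?_ ?_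
      · refine Eventually.of_forall fun ω => ?_
        intro k l hkl
        refine Set.indicator_le_indicator ?_
        exact ENNReal.toReal_mono (trunc_ne_top (X := Xlim) l ω)
          (min_le_min le_rfl (Nat.cast_le.2 hkl))
      · filter_upwards [hgae j] with ω hω
        by_cases hmem : ω ∈ A j
        · have hgv : gval j ω = Xlim ω := Set.indicator_of_mem hmem _
          have hXfin : Xlim ω ≠ ∞ := by rw [hgv] at hω; exact hω.ne
          obtain ⟨K, hK⟩ := ENNReal.exists_nat_gt hXfin
          refine tendsto_atTop_of_eventually_const (i₀ := K) fun k hk => ?_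
          rw [Set.indicator_of_mem hmem]
          show (min (Xlim ω) (k : ℝ≥0∞)).toReal = (gval j ω).toReal
          rw [hgv, min_eq_left (hK.le.trans (by exact_mod_cast Nat.cast_le.2 hk))]
        · refine tendsto_atTop_of_eventually_const (i₀ := 0) fun k _ => ?_
          rw [Set.indicator_of_notMem hmem]
          show (0 : ℝ) = (gval j ω).toReal
          have hz : gval j ω = 0 := Set.indicator_of_notMem hmem _
          rw [hz, ENNReal.toReal_zero]
    have hind : ∀ k : ℕ, P[(A j).indicator (trunc Xlim k)|(⨅ k, ℱ k)]
        =ᵐ[P] (A j).indicator (P[trunc Xlim k|(⨅ k, ℱ k)]) := fun k =>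
      condExp_indicator (trunc_integrable P hXlim k) (hAmeas j)
    filter_upwards [htmc, ae_all_iff.2 hind] with ω h1 h2
    intro hmem
    have h3 : Tendsto (fun k => ENNReal.ofReal ((P[(A j).indicator (trunc Xlim k)|(⨅ k, ℱ k)]) ω))
        atTop (𝓝 (ENNReal.ofReal ((P[g j|(⨅ k, ℱ k)]) ω))) :=
      (ENNReal.continuous_ofReal.tendsto _).comp h1
    refine le_of_tendsto h3 (Eventually.of_forall fun k => ?_)
    rw [h2 k, Set.indicator_of_mem hmem, hTapp ω]
    exact le_iSup (fun k => ENNReal.ofReal ((P[trunc Xlim k|(⨅ k, ℱ k)]) ω)) k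
  have hupper : ∀ᵐ ω ∂P, limsup (fun n => E n ω) atTop ≤ T ω := by
    have hbackg : ∀ j : ℕ, ∀ᵐ ω ∂P, Tendsto (fun n => (P[g j|ℱ n]) ω) atTop
        (𝓝 ((P[g j|(⨅ k, ℱ k)]) ω)) := fun j => backward_levy P ℱ hle hantit (hgint j)
    have hEF : ∀ᵐ ω ∂P, ∀ n, E n ω ≤ condExpENN P (ℱ n) Xlim ω := ae_all_iff.2 hEleF
    have hkey1' : ∀ᵐ ω ∂P, ∀ j n k : ℕ, ω ∈ A j →
        (P[trunc Xlim k|ℱ n]) ω ≤ (P[g j|ℱ n]) ω :=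
      ae_all_iff.2 fun j => ae_all_iff.2 fun n => ae_all_iff.2 fun k => hkey1 j n k
    have hkey2' := ae_all_iff.2 hkey2
    have hbackg' := ae_all_iff.2 hbackg
    filter_upwards [hEF, hkey1', hkey2', hbackg'] with ω h1 h2 h3 h4
    by_cases hTtop : T ω = ∞
    · rw [hTtop]
      exact le_top
    · obtain ⟨j, hj⟩ := ENNReal.exists_nat_gt hTtop
      have hmem : ω ∈ A j := le_of_lt hj
      have h5 : ∀ n, E n ω ≤ ENNReal.ofReal ((P[g j|ℱ n]) ω) := by
        intro n
        refine le_trans (h1 n) ?_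
        refine iSup_le fun k => ENNReal.ofReal_le_ofReal (h2 j n k hmem)
      have h6 : Tendsto (fun n => ENNReal.ofReal ((P[g j|ℱ n]) ω)) atTop
          (𝓝 (ENNReal.ofReal ((P[g j|(⨅ k, ℱ k)]) ω))) :=
        (ENNReal.continuous_ofReal.tendsto _).comp (h4 j)
      calc limsup (fun n => E n ω) atTop
          ≤ limsup (fun n => ENNReal.ofReal ((P[g j|ℱ n]) ω)) atTop :=
            limsup_le_limsup (Eventually.of_forall h5)
        _ = ENNReal.ofReal ((P[g j|(⨅ k, ℱ k)]) ω) := h6.limsup_eq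
        _ ≤ T ω := h3 j hmem
  filter_upwards [hlower, hupper] with ω h1 h2
  exact tendsto_of_le_liminf_of_limsup_le h1 h2

end EZSDU
end
end

section
/- Optimality of the candidate constant-proportions strategy among constant proportional strategies: Assume θ > 0 and η > 0. Let D := {(π,ξ) ∈ ℝ×(0,∞) : H(π,ξ) > 0} and define h(π,ξ) := (1/(1-R)) (bθ ξ^{1-S}/H(π,ξ))^θ on D. Then (λ/(σR), η) ∈ D with H(λ/(σR), η) = θη > 0, h(λ/(σR), η) = b^θ η^{-θS}/(1-R), and for every (π,ξ) ∈ D one has h(π,ξ) ≤ b^θ η^{-θS}/(1-R); i.e. h attains its global maximum over D at (λ/(σR), η). -/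
/-- **Optimality of the candidate constant-proportions strategy among constant proportional
strategies.** With `H(π,ξ) = δθ + (R-1)(r + λσπ - ξ - π²σ²R/2)`,
`η = (1/S)(δ + (S-1)r + (S-1)λ²/(2R))` and `h(π,ξ) = (1/(1-R))(bθξ^{1-S}/H(π,ξ))^θ` on
`D = {H > 0}`: the point `(λ/(σR), η)` lies in `D` with `H(λ/(σR),η) = θη`,
`h(λ/(σR),η) = b^θ η^{-θS}/(1-R)`, and `h ≤ b^θ η^{-θS}/(1-R)` on all of `D`. -/
theorem candidate_optimal_constant_proportions
    (b δ R S θ r μv σ lam η : ℝ) (hb : 0 < b) (hσ : 0 < σ)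
    (hR0 : 0 < R) (hR1 : R ≠ 1) (hS0 : 0 < S) (hS1 : S ≠ 1) (hRS : R ≠ S)
    (hθ : θ = (1 - R) / (1 - S)) (hθpos : 0 < θ)
    (hlam : lam = (μv - r) / σ)
    (hη : η = (1 / S) * (δ + (S - 1) * r + (S - 1) * lam ^ 2 / (2 * R)))
    (hηpos : 0 < η)
    (H : ℝ → ℝ → ℝ)
    (hH : ∀ p ξ : ℝ, H p ξ = δ * θ + (R - 1) * (r + lam * σ * p - ξ - p ^ 2 * σ ^ 2 * R / 2))
    (h : ℝ → ℝ → ℝ)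
    (hh : ∀ p ξ : ℝ, h p ξ = (1 / (1 - R)) * (b * θ * ξ ^ (1 - S) / H p ξ) ^ θ) :
    H (lam / (σ * R)) η = θ * η ∧
    0 < H (lam / (σ * R)) η ∧
    h (lam / (σ * R)) η = b ^ θ * η ^ (-(θ * S)) / (1 - R) ∧
    ∀ p ξ : ℝ, 0 < ξ → 0 < H p ξ → h p ξ ≤ b ^ θ * η ^ (-(θ * S)) / (1 - R) := by
  have hS1' : (1 : ℝ) - S ≠ 0 := sub_ne_zero.mpr (fun hc => hS1 (by linarith))
  have hσ' : σ ≠ 0 := ne_of_gt hσ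
  have hR' : R ≠ 0 := ne_of_gt hR0
  have hS' : S ≠ 0 := ne_of_gt hS0
  have hθ0 : θ ≠ 0 := ne_of_gt hθpos
  have hθ' : θ * (1 - S) = 1 - R := by rw [hθ]; field_simp
  -- key structural identity
  have key : ∀ p ξ : ℝ, H p ξ = θ * (S * η + (1 - S) * ξ)
      + (1 - R) * (σ ^ 2 * R / 2) * (p - lam / (σ * R)) ^ 2 := by
    intro p ξ
    rw [hH p ξ]
    have step1 : δ * θ + (R - 1) * (r + lam ^ 2 / (2 * R) - ξ) = θ * (S * η + (1 - S) * ξ) := by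
      rw [hθ, hη]; field_simp; ring
    have step2 : δ * θ + (R - 1) * (r + lam * σ * p - ξ - p ^ 2 * σ ^ 2 * R / 2)
        = (δ * θ + (R - 1) * (r + lam ^ 2 / (2 * R) - ξ))
          + (1 - R) * (σ ^ 2 * R / 2) * (p - lam / (σ * R)) ^ 2 := by
      field_simp; ring
    rw [step2, step1]
  have Hstar : H (lam / (σ * R)) η = θ * η := by rw [key]; ring
  have hηS : (0:ℝ) < η ^ (-S) := Real.rpow_pos_of_pos hηpos _
  have hne : η ^ (-S) * η ^ S = 1 := by
    rw [← Real.rpow_add hηpos]; simp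
  have hval : (b * η ^ (-S)) ^ θ = b ^ θ * η ^ (-(θ * S)) := by
    rw [Real.mul_rpow hb.le hηS.le, ← Real.rpow_mul hηpos.le]
    ring_nf
  have hstar_val : h (lam / (σ * R)) η = b ^ θ * η ^ (-(θ * S)) / (1 - R) := by
    rw [hh, Hstar]
    have e : b * θ * η ^ (1 - S) / (θ * η) = b * η ^ (-S) := by
      rw [show (1 : ℝ) - S = -S + 1 by ring, Real.rpow_add hηpos, Real.rpow_one]
      field_simp
    rw [e, hval]; ring
  refine ⟨Hstar, by rw [Hstar]; positivity, hstar_val, ?_⟩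
  intro p ξ hξ hHpos
  have hξS : (0:ℝ) < ξ ^ (1 - S) := Real.rpow_pos_of_pos hξ _
  have e1 : b * η ^ (-S) * (θ * (η ^ S * ξ ^ (1 - S))) = b * θ * ξ ^ (1 - S) := by
    linear_combination b * θ * ξ ^ (1 - S) * hne
  rcases lt_or_gt_of_ne hR1 with hRlt | hRgt
  · -- R < 1, hence S < 1
    have h1R : (0:ℝ) < 1 - R := by linarith
    have hSlt : S < 1 := by nlinarith
    -- AM-GM
    have am : η ^ S * ξ ^ (1 - S) ≤ S * η + (1 - S) * ξ :=
      Real.geom_mean_le_arith_mean2_weighted hS0.le (by linarith) hηpos.le hξ.le (by ring)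
    have hHge : θ * (η ^ S * ξ ^ (1 - S)) ≤ H p ξ := by
      rw [key p ξ]
      have sq : 0 ≤ (1 - R) * (σ ^ 2 * R / 2) * (p - lam / (σ * R)) ^ 2 := by positivity
      linarith [mul_le_mul_of_nonneg_left am hθpos.le]
    have hdiv : b * θ * ξ ^ (1 - S) / H p ξ ≤ b * η ^ (-S) := by
      rw [div_le_iff₀ hHpos]
      have h2 := mul_le_mul_of_nonneg_left hHge (by positivity : (0:ℝ) ≤ b * η ^ (-S))
      linarith [e1 ▸ h2]
    have hrpow := Real.rpow_le_rpow (by positivity) hdiv hθpos.le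
    rw [hh p ξ]
    calc (1 / (1 - R)) * (b * θ * ξ ^ (1 - S) / H p ξ) ^ θ
        ≤ (1 / (1 - R)) * (b * η ^ (-S)) ^ θ := by
          apply mul_le_mul_of_nonneg_left hrpow (by positivity)
      _ = b ^ θ * η ^ (-(θ * S)) / (1 - R) := by rw [hval]; ring
  · -- R > 1, hence S > 1
    have h1R : 1 - R < 0 := by linarith
    have hSgt : 1 < S := by nlinarith
    -- reversed AM-GM
    have am : S * η + (1 - S) * ξ ≤ η ^ S * ξ ^ (1 - S) := by
      set A := η ^ S * ξ ^ (1 - S) with hA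
      have hApos : 0 < A := by positivity
      have hgm : A ^ (1 / S) * ξ ^ (1 - 1 / S) ≤ (1 / S) * A + (1 - 1 / S) * ξ :=
        Real.geom_mean_le_arith_mean2_weighted (by positivity)
          (by rw [sub_nonneg]; exact div_le_one_of_le₀ (by linarith) hS0.le)
          hApos.le hξ.le (by ring)
      have hgeq : A ^ (1 / S) * ξ ^ (1 - 1 / S) = η := by
        rw [hA, Real.mul_rpow (by positivity) hξS.le, ← Real.rpow_mul hηpos.le,
          ← Real.rpow_mul hξ.le, mul_one_div, div_self hS', Real.rpow_one, mul_assoc,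
          ← Real.rpow_add hξ, show (1 - S) * (1 / S) + (1 - 1 / S) = 0 by field_simp; ring,
          Real.rpow_zero, mul_one]
      rw [hgeq] at hgm
      have h3 := mul_le_mul_of_nonneg_left hgm hS0.le
      have h4 : S * ((1 / S) * A + (1 - 1 / S) * ξ) = A + (S - 1) * ξ := by
        field_simp
      rw [h4] at h3
      linarith
    have hHle : H p ξ ≤ θ * (η ^ S * ξ ^ (1 - S)) := by
      rw [key p ξ]
      have sq : (1 - R) * (σ ^ 2 * R / 2) * (p - lam / (σ * R)) ^ 2 ≤ 0 := by
        apply mul_nonpos_of_nonpos_of_nonneg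
        · apply mul_nonpos_of_nonpos_of_nonneg h1R.le (by positivity)
        · positivity
      linarith [mul_le_mul_of_nonneg_left am hθpos.le]
    have hdiv : b * η ^ (-S) ≤ b * θ * ξ ^ (1 - S) / H p ξ := by
      rw [le_div_iff₀ hHpos]
      have h2 := mul_le_mul_of_nonneg_left hHle (by positivity : (0:ℝ) ≤ b * η ^ (-S))
      linarith [e1 ▸ h2]
    have hrpow := Real.rpow_le_rpow (by positivity) hdiv hθpos.le
    rw [hh p ξ]
    calc (1 / (1 - R)) * (b * θ * ξ ^ (1 - S) / H p ξ) ^ θ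
        ≤ (1 / (1 - R)) * (b * η ^ (-S)) ^ θ := by
          apply mul_le_mul_of_nonpos_left hrpow (by
            apply div_nonpos_of_nonneg_of_nonpos zero_le_one h1R.le)
      _ = b ^ θ * η ^ (-(θ * S)) / (1 - R) := by rw [hval]; ring
end

section
/- Explicit utility process for a deterministic consumption stream: Let b > 0, δ ∈ ℝ, R, S ∈ (0,∞)\{1} with R ≠ S, θ := (1-R)/(1-S) > 0 and ρ := (S-R)/(1-R) = (θ-1)/θ. Let c : [0,∞) → (0,∞) be measurable with ∫_0^∞ e^{-δs} c(s)^{1-S} ds < ∞. Define V(t) := (1/(1-R)) (b ∫_t^∞ e^{-δs} c(s)^{1-S} ds)^θ. Then lim_{t→∞} V(t) = 0 and for every t ≥ 0, V(t) = ∫_t^∞ b e^{-δs} (c(s)^{1-S}/(1-S)) ((1-R)V(s))^ρ ds. -/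
open MeasureTheory Set Filter


lemma EZ_key (f : ℝ → ℝ) (hf : Measurable f) (hfpos : ∀ s : ℝ, 0 < s → 0 < f s)
    (hint : IntegrableOn f (Ioi 0)) (θ : ℝ) (hθ : 0 < θ) (t : ℝ) (ht : 0 ≤ t) :
    (∫ s in Ioi t, f s * (∫ u in Ioi s, f u) ^ (θ - 1)) =
      (∫ s in Ioi t, f s) ^ θ / θ := by
  set f₀ : ℝ → ℝ := (Ioi (0:ℝ)).indicator f with hf₀def
  have hf₀int : Integrable f₀ := by
    rw [hf₀def, integrable_indicator_iff measurableSet_Ioi]; exact hint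
  set C : ℝ := ∫ s in Ioi (0:ℝ), f s with hC
  set H : ℝ → ℝ := fun u => C - ∫ x in (0:ℝ)..u, f₀ x with hHdef
  set G : ℝ → ℝ := fun u => ∫ s in Ioi u, f s with hGdef
  have hIntTail : ∀ u : ℝ, 0 ≤ u → IntegrableOn f (Ioi u) :=
    fun u hu => hint.mono_set (Ioi_subset_Ioi hu)
  have hIntIoc : ∀ u v : ℝ, 0 ≤ u → IntegrableOn f (Ioc u v) := by
    intro u v hu
    exact hint.mono_set (fun x hx => lt_of_le_of_lt hu hx.1)
  have hHG : ∀ u : ℝ, 0 ≤ u → H u = G u := by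
    intro u hu
    have h1 : (∫ x in (0:ℝ)..u, f₀ x) = ∫ x in Ioc 0 u, f x := by
      rw [intervalIntegral.integral_of_le hu]
      exact setIntegral_congr_fun measurableSet_Ioc (fun x hx => indicator_of_mem hx.1 f)
    have h2 : C = (∫ x in Ioc 0 u, f x) + ∫ s in Ioi u, f s := by
      rw [hC, ← setIntegral_union (Ioc_disjoint_Ioi le_rfl) measurableSet_Ioi
        (hIntIoc 0 u le_rfl) (hIntTail u hu), Ioc_union_Ioi_eq_Ioi hu]
    rw [hHdef]; simp only; rw [h1, h2, hGdef]; ring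
  have hHcont : Continuous H :=
    continuous_const.sub
      (intervalIntegral.continuous_primitive (fun a b => hf₀int.intervalIntegrable) 0)
  have hIocpos : ∀ u v : ℝ, 0 ≤ u → u < v → 0 < ∫ x in Ioc u v, f x := by
    intro u v hu huv
    have hnn : 0 ≤ᵐ[volume.restrict (Ioc u v)] f :=
      (ae_restrict_iff' measurableSet_Ioc).2 (Filter.Eventually.of_forall
        (fun x hx => (hfpos x (lt_of_le_of_lt hu hx.1)).le))
    rw [setIntegral_pos_iff_support_of_nonneg_ae hnn (hIntIoc u v hu)]
    have hsub : Ioc u v ⊆ Function.support f ∩ Ioc u v :=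
      fun x hx => ⟨ne_of_gt (hfpos x (lt_of_le_of_lt hu hx.1)), hx⟩
    calc (0:ENNReal) < volume (Ioc u v) := by rw [Real.volume_Ioc]; simp [huv]
      _ ≤ volume (Function.support f ∩ Ioc u v) := measure_mono hsub
  have hHsub : ∀ u v : ℝ, 0 ≤ u → u ≤ v → H u - H v = ∫ x in Ioc u v, f x := by
    intro u v hu huv
    have h1 : (∫ x in (0:ℝ)..v, f₀ x) - ∫ x in (0:ℝ)..u, f₀ x = ∫ x in u..v, f₀ x := by
      rw [← intervalIntegral.integral_add_adjacent_intervals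
        (hf₀int.intervalIntegrable (a := 0) (b := u))
        (hf₀int.intervalIntegrable (a := u) (b := v))]
      ring
    have h2 : (∫ x in u..v, f₀ x) = ∫ x in Ioc u v, f x := by
      rw [intervalIntegral.integral_of_le huv]
      exact setIntegral_congr_fun measurableSet_Ioc
        (fun x hx => indicator_of_mem (lt_of_le_of_lt hu hx.1) f)
    rw [hHdef]; simp only; rw [← h2, ← h1]; ring
  have hHanti : ∀ u v : ℝ, 0 ≤ u → u < v → H v < H u := by
    intro u v hu huv
    have h := hHsub u v hu huv.le
    have := hIocpos u v hu huv
    linarith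
  have hHle : ∀ u v : ℝ, 0 ≤ u → u ≤ v → H v ≤ H u := by
    intro u v hu huv
    rcases eq_or_lt_of_le huv with rfl | h
    · exact le_rfl
    · exact (hHanti u v hu h).le
  have hHpos : ∀ u : ℝ, 0 ≤ u → 0 < H u := by
    intro u hu
    have h1 : H (u+1) < H u := hHanti u (u+1) hu (by linarith)
    have h2 : 0 ≤ H (u+1) := by
      rw [hHG (u+1) (by linarith), hGdef]
      exact setIntegral_nonneg measurableSet_Ioi
        (fun x hx => (hfpos x (lt_of_le_of_lt (by linarith) hx)).le)
    linarith
  have hHtend : Tendsto H atTop (nhds 0) := by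
    have h1 : Tendsto (fun u => ∫ x in (0:ℝ)..u, f₀ x) atTop (nhds (∫ x in Ioi (0:ℝ), f₀ x)) :=
      intervalIntegral_tendsto_integral_Ioi 0 hf₀int.integrableOn tendsto_id
    have h2 : (∫ x in Ioi (0:ℝ), f₀ x) = C := by
      rw [hC]
      exact setIntegral_congr_fun measurableSet_Ioi (fun x hx => indicator_of_mem hx f)
    rw [h2] at h1
    have := (tendsto_const_nhds (x := C) (f := atTop (α := ℝ))).sub h1
    simpa using this
  set μ : Measure ℝ := (volume.restrict (Ioi t)).withDensity (fun s => ENNReal.ofReal (f s))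
    with hμdef
  have hμapply : ∀ A : Set ℝ, MeasurableSet A →
      μ A = ∫⁻ s in A ∩ Ioi t, ENNReal.ofReal (f s) := by
    intro A hA
    rw [hμdef, withDensity_apply _ hA, Measure.restrict_restrict hA]
  have hμIoi : ∀ u : ℝ, t ≤ u → μ (Ioi u) = ENNReal.ofReal (H u) := by
    intro u hu
    have hu0 : 0 ≤ u := le_trans ht hu
    rw [hμapply _ measurableSet_Ioi, Ioi_inter_Ioi, max_eq_left hu, hHG u hu0, hGdef]
    rw [← ofReal_integral_eq_lintegral_ofReal (hIntTail u hu0)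
      ((ae_restrict_iff' measurableSet_Ioi).2 (Filter.Eventually.of_forall
        (fun x hx => (hfpos x (lt_of_le_of_lt hu0 hx)).le)))]
  have hμuniv : μ univ = ENNReal.ofReal (H t) := by
    have h := hμIoi t le_rfl
    rw [hμapply _ measurableSet_Ioi, inter_self] at h
    rw [hμapply _ MeasurableSet.univ, univ_inter]
    exact h
  have hfin : IsFiniteMeasure μ := ⟨by rw [hμuniv]; exact ENNReal.ofReal_lt_top⟩
  have hmap : μ.map H = volume.restrict (Ioc 0 (H t)) := by
    refine Measure.ext_of_Iic _ _ (fun x => ?_)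
    rw [Measure.map_apply hHcont.measurable measurableSet_Iic,
      Measure.restrict_apply measurableSet_Iic,
      hμapply _ (hHcont.measurable measurableSet_Iic)]
    rcases le_or_gt x 0 with hx | hx
    · have h1 : H ⁻¹' Iic x ∩ Ioi t = ∅ := by
        ext s
        simp only [mem_inter_iff, mem_preimage, mem_Iic, mem_Ioi, mem_empty_iff_false,
          iff_false, not_and]
        intro hs hst
        exact absurd hs (not_le.2 (lt_of_le_of_lt hx (hHpos s (le_trans ht hst.le))))
      have h2 : Iic x ∩ Ioc 0 (H t) = ∅ := by
        ext y
        simp only [mem_inter_iff, mem_Iic, mem_Ioc, mem_empty_iff_false, iff_false, not_and]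
        intro hy h; exfalso; linarith
      rw [h1, h2]; simp
    · rcases lt_or_ge x (H t) with hxt | hxt
      · have hev : ∀ᶠ M in atTop, H M < x := hHtend.eventually_lt_const hx
        obtain ⟨M, hM1, hM2⟩ := (hev.and (eventually_ge_atTop t)).exists
        obtain ⟨sx, hsx_mem, hsx⟩ := intermediate_value_Icc' hM2 hHcont.continuousOn
          (show x ∈ Icc (H M) (H t) from ⟨hM1.le, hxt.le⟩)
        have hsxt : t < sx := by
          rcases eq_or_lt_of_le hsx_mem.1 with h | h
          · exfalso; rw [← h] at hsx; rw [hsx] at hxt; exact lt_irrefl _ hxt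
          · exact h
        have h1 : H ⁻¹' Iic x ∩ Ioi t = Ici sx := by
          ext s
          simp only [mem_inter_iff, mem_preimage, mem_Iic, mem_Ioi, mem_Ici]
          constructor
          · rintro ⟨h2, h3⟩
            by_contra hlt
            push_neg at hlt
            have := hHanti s sx (le_trans ht h3.le) hlt
            rw [hsx] at this
            linarith
          · intro hss
            refine ⟨?_, lt_of_lt_of_le hsxt hss⟩
            rw [← hsx]
            exact hHle sx s (le_trans ht hsxt.le) hss
        have h2 : Iic x ∩ Ioc 0 (H t) = Ioc 0 x := by
          ext y
          simp only [mem_inter_iff, mem_Iic, mem_Ioc]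
          exact ⟨fun h => ⟨h.2.1, h.1⟩, fun h => ⟨h.2, h.1, le_trans h.2 hxt.le⟩⟩
        rw [h1, h2, Real.volume_Ioc, sub_zero]
        have hIci : Ici sx =ᵐ[volume] Ioi sx := (Ioi_ae_eq_Ici (a := sx)).symm
        rw [setLIntegral_congr hIci]
        have := hμIoi sx hsxt.le
        rw [hμapply _ measurableSet_Ioi, Ioi_inter_Ioi, max_eq_left hsxt.le] at this
        rw [this, hsx]
      · have h1 : H ⁻¹' Iic x ∩ Ioi t = Ioi t := by
          refine inter_eq_right.2 (fun s hs => ?_)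
          exact le_trans (hHanti t s ht hs).le hxt
        have h2 : Iic x ∩ Ioc 0 (H t) = Ioc 0 (H t) :=
          inter_eq_right.2 (fun y hy => le_trans hy.2 hxt)
        rw [h1, h2, Real.volume_Ioc, sub_zero]
        have := hμIoi t le_rfl
        rw [hμapply _ measurableSet_Ioi, inter_self] at this
        exact this
  -- now the integral computation
  have hHt : 0 < H t := hHpos t ht
  have step1 : (∫ s in Ioi t, f s * (G s) ^ (θ - 1)) =
      ∫ s in Ioi t, ((f s).toNNReal : ℝ) • ((H s) ^ (θ - 1)) := by
    refine setIntegral_congr_fun measurableSet_Ioi (fun s hs => ?_)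
    have hs0 : 0 < s := lt_of_le_of_lt ht hs
    rw [hHG s hs0.le, Real.coe_toNNReal _ (hfpos s hs0).le, smul_eq_mul]
  have step2 : (∫ s in Ioi t, ((f s).toNNReal : ℝ) • ((H s) ^ (θ - 1))) =
      ∫ s, (H s) ^ (θ - 1) ∂μ := by
    rw [hμdef]
    exact (integral_withDensity_eq_integral_smul hf.real_toNNReal
      (fun s => (H s) ^ (θ - 1))).symm
  have step3 : (∫ s, (H s) ^ (θ - 1) ∂μ) = ∫ x, x ^ (θ - 1) ∂(μ.map H) :=
    (integral_map hHcont.aemeasurable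
      (Measurable.aestronglyMeasurable (measurable_id.pow_const (θ - 1)))).symm
  have step4 : (∫ x, x ^ (θ - 1) ∂(μ.map H)) = (H t) ^ θ / θ := by
    rw [hmap]
    have : (∫ x in Ioc 0 (H t), x ^ (θ - 1)) = ∫ x in (0:ℝ)..(H t), x ^ (θ - 1) := by
      rw [intervalIntegral.integral_of_le hHt.le]
    rw [this, integral_rpow (Or.inl (by linarith : (-1:ℝ) < θ - 1))]
    rw [sub_add_cancel, Real.zero_rpow (ne_of_gt hθ), sub_zero]
  calc (∫ s in Ioi t, f s * (G s) ^ (θ - 1)) = (H t) ^ θ / θ := by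
        rw [step1, step2, step3, step4]
    _ = (G t) ^ θ / θ := by rw [hHG t ht]

lemma EZ_tail_tendsto (f : ℝ → ℝ) (hint : IntegrableOn f (Ioi 0)) :
    Tendsto (fun t => ∫ s in Ioi t, f s) atTop (nhds 0) := by
  set f₀ : ℝ → ℝ := (Ioi (0:ℝ)).indicator f with hf₀def
  have hf₀int : Integrable f₀ := by
    rw [hf₀def, integrable_indicator_iff measurableSet_Ioi]; exact hint
  set C : ℝ := ∫ s in Ioi (0:ℝ), f s with hC
  have hCf₀ : (∫ x in Ioi (0:ℝ), f₀ x) = C :=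
    setIntegral_congr_fun measurableSet_Ioi (fun x hx => indicator_of_mem hx f)
  have h1 : Tendsto (fun u => C - ∫ x in (0:ℝ)..u, f₀ x) atTop (nhds 0) := by
    have h := intervalIntegral_tendsto_integral_Ioi 0 hf₀int.integrableOn
      (tendsto_id (α := ℝ))
    rw [hCf₀] at h
    have := (tendsto_const_nhds (x := C) (f := atTop (α := ℝ))).sub h
    simpa using this
  refine h1.congr' ?_
  filter_upwards [eventually_ge_atTop (0:ℝ)] with u hu
  have hIoc : IntegrableOn f (Ioc 0 u) := hint.mono_set (fun x hx => hx.1)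
  have hTail : IntegrableOn f (Ioi u) := hint.mono_set (Ioi_subset_Ioi hu)
  have h2 : (∫ x in (0:ℝ)..u, f₀ x) = ∫ x in Ioc 0 u, f x := by
    rw [intervalIntegral.integral_of_le hu]
    exact setIntegral_congr_fun measurableSet_Ioc (fun x hx => indicator_of_mem hx.1 f)
  have h3 : C = (∫ x in Ioc 0 u, f x) + ∫ s in Ioi u, f s := by
    rw [hC, ← setIntegral_union (Ioc_disjoint_Ioi le_rfl) measurableSet_Ioi hIoc hTail,
      Ioc_union_Ioi_eq_Ioi hu]
  rw [h2, h3]; ring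

/-- **Explicit utility process for a deterministic consumption stream.** If
`∫₀^∞ e^{-δs} c(s)^{1-S} ds < ∞` and
`V(t) = (1/(1-R)) (b ∫_t^∞ e^{-δs} c(s)^{1-S} ds)^θ`, then `V(t) → 0` as `t → ∞` and `V`
solves the deterministic Epstein–Zin equation
`V(t) = ∫_t^∞ b e^{-δs} (c(s)^{1-S}/(1-S)) ((1-R)V(s))^ρ ds` for all `t ≥ 0`. -/
theorem deterministic_EZ_utility_process
    (b δ R S θ ρ : ℝ) (hb : 0 < b)
    (hR0 : 0 < R) (hR1 : R ≠ 1) (hS0 : 0 < S) (hS1 : S ≠ 1) (hRS : R ≠ S)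
    (hθ : θ = (1 - R) / (1 - S)) (hθpos : 0 < θ)
    (hρ : ρ = (S - R) / (1 - R))
    (c : ℝ → ℝ) (hcm : Measurable c) (hcpos : ∀ s : ℝ, 0 ≤ s → 0 < c s)
    (hint : IntegrableOn (fun s => Real.exp (-δ * s) * c s ^ (1 - S)) (Set.Ioi 0))
    (V : ℝ → ℝ)
    (hV : ∀ t : ℝ, V t =
      (1 / (1 - R)) * (b * ∫ s in Set.Ioi t, Real.exp (-δ * s) * c s ^ (1 - S)) ^ θ) :
    Filter.Tendsto V Filter.atTop (nhds 0) ∧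
    ∀ t : ℝ, 0 ≤ t →
      V t = ∫ s in Set.Ioi t,
        b * Real.exp (-δ * s) * (c s ^ (1 - S) / (1 - S)) * ((1 - R) * V s) ^ ρ := by
  set f : ℝ → ℝ := fun s => Real.exp (-δ * s) * c s ^ (1 - S) with hfdef
  have hf : Measurable f := ((measurable_id.const_mul (-δ)).exp).mul (hcm.pow_const (1 - S))
  have hfpos : ∀ s : ℝ, 0 < s → 0 < f s := fun s hs =>
    mul_pos (Real.exp_pos _) (Real.rpow_pos_of_pos (hcpos s hs.le) _)
  set G : ℝ → ℝ := fun u => ∫ s in Ioi u, f s with hGdef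
  have h1S : (1:ℝ) - S ≠ 0 := sub_ne_zero.2 (Ne.symm hS1)
  have h1R : (1:ℝ) - R ≠ 0 := sub_ne_zero.2 (Ne.symm hR1)
  have hθ1S : θ * (1 - S) = 1 - R := by rw [hθ]; field_simp
  have hθρ : θ * ρ = θ - 1 := by
    rw [hθ, hρ]; field_simp; ring
  have hGnonneg : ∀ u : ℝ, 0 ≤ u → 0 ≤ G u := fun u hu =>
    setIntegral_nonneg measurableSet_Ioi (fun x hx => (hfpos x (lt_of_le_of_lt hu hx)).le)
  constructor
  · -- tendsto
    have h1 : Tendsto G atTop (nhds 0) := EZ_tail_tendsto f hint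
    have h2 : Tendsto (fun t => b * G t) atTop (nhds 0) := by
      simpa using h1.const_mul b
    have hc : ContinuousAt (fun x : ℝ => x ^ θ) 0 :=
      Real.continuousAt_rpow_const 0 θ (Or.inr hθpos.le)
    have h3 : Tendsto (fun t => (b * G t) ^ θ) atTop (nhds 0) := by
      have := hc.tendsto.comp h2
      simpa [Real.zero_rpow hθpos.ne', Function.comp_def] using this
    have h4 : Tendsto (fun t => (1 / (1 - R)) * (b * G t) ^ θ) atTop (nhds 0) := by
      simpa using h3.const_mul (1 / (1 - R))
    exact h4.congr (fun t => (hV t).symm)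
  · intro t ht
    have hbθ : b ^ θ = b * b ^ (θ - 1) := by
      conv_lhs => rw [show θ = 1 + (θ - 1) by ring]
      rw [Real.rpow_add hb, Real.rpow_one]
    have hcongr : ∀ s ∈ Ioi t,
        b * Real.exp (-δ * s) * (c s ^ (1 - S) / (1 - S)) * ((1 - R) * V s) ^ ρ
          = (b ^ θ / (1 - S)) * (f s * G s ^ (θ - 1)) := by
      intro s hs
      have hs0 : (0:ℝ) < s := lt_of_le_of_lt ht hs
      have hGs : 0 ≤ G s := hGnonneg s hs0.le
      have hbGs : 0 ≤ b * G s := mul_nonneg hb.le hGs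
      have h5 : (1 - R) * V s = (b * G s) ^ θ := by
        rw [hV s]; field_simp; rfl
      have h6 : ((1 - R) * V s) ^ ρ = b ^ (θ - 1) * G s ^ (θ - 1) := by
        rw [h5, ← Real.rpow_mul hbGs, hθρ, Real.mul_rpow hb.le hGs]
      rw [h6, hfdef]; simp only
      rw [hbθ]; ring
    rw [setIntegral_congr_fun measurableSet_Ioi hcongr, integral_const_mul _ _,
      EZ_key f hf hfpos hint θ hθpos t ht, hV t,
      Real.mul_rpow hb.le (hGnonneg t ht)]
    have hθne : θ ≠ 0 := hθpos.ne'
    rw [← hθ1S]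
    field_simp
    rfl
end

section
/- The value process of a constant proportional investment-consumption strategy: Let b > 0, δ ∈ ℝ, R, S ∈ (0,∞)\{1} with R ≠ S, θ := (1-R)/(1-S) > 0, ρ := (S-R)/(1-R). Let B be a standard (𝓕_t)-Brownian motion, r, μ ∈ ℝ, σ > 0, λ := (μ-r)/σ, and for π ∈ ℝ, ξ > 0, x > 0 let X_t := x exp(πσ B_t + (r + π(μ-r) - ξ - π²σ²/2)t) and C := ξX. Suppose H(π,ξ) := δθ + (R-1)(r + λσπ - ξ - π²σ²R/2) > 0. Define V_t := e^{-δθ t} (bθ ξ^{1-S}/H(π,ξ))^θ X_t^{1-R}/(1-R). Then E[∫_0^∞ |b e^{-δs}(C_s^{1-S}/(1-S))((1-R)V_s)^ρ| ds] < ∞ and for every t ≥ 0, V_t = E[∫_t^∞ b e^{-δs} (C_s^{1-S}/(1-S)) ((1-R)V_s)^ρ ds | 𝓕_t] P-a.s.; that is, V is a utility process for the Epstein–Zin aggregator and the consumption stream C = ξX. -/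
open MeasureTheory ProbabilityTheory Set Real
open scoped NNReal ENNReal

lemma gaussianPDFReal_mul_exp (c : ℝ) {v : ℝ≥0} (hv : v ≠ 0) (y : ℝ) :
    gaussianPDFReal 0 v y * Real.exp (c * y)
      = Real.exp (c ^ 2 * v / 2) * gaussianPDFReal (c * v) v y := by
  have hv' : (v : ℝ) ≠ 0 := by exact_mod_cast hv
  simp only [gaussianPDFReal, sub_zero]
  rw [mul_assoc, ← Real.exp_add,
    show Real.exp (c ^ 2 * v / 2) * ((√(2 * Real.pi * v))⁻¹ *
        Real.exp (-(y - c * v) ^ 2 / (2 * v)))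
      = (√(2 * Real.pi * v))⁻¹ *
        (Real.exp (c ^ 2 * v / 2) * Real.exp (-(y - c * v) ^ 2 / (2 * v))) by ring,
    ← Real.exp_add]
  congr 1
  field_simp
  ring

lemma exp_moment_gaussianReal (c : ℝ) (v : ℝ≥0) :
    Integrable (fun y => Real.exp (c * y)) (gaussianReal 0 v) ∧
    ∫ y, Real.exp (c * y) ∂(gaussianReal 0 v) = Real.exp (c ^ 2 * v / 2) := by
  have hmeas : Measurable fun y : ℝ => Real.exp (c * y) :=
    Real.measurable_exp.comp (measurable_const.mul measurable_id)
  by_cases hv : v = 0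
  · subst hv
    simp only [gaussianReal_zero_var]
    constructor
    · refine ⟨hmeas.aestronglyMeasurable, ?_⟩
      simp [HasFiniteIntegral, lintegral_dirac]
    · rw [integral_dirac]
      simp
  · rw [gaussianReal_of_var_ne_zero _ hv]
    have hdens : gaussianPDF 0 v = fun y => ((gaussianPDFReal 0 v y).toNNReal : ℝ≥0∞) := rfl
    have hmeasd : Measurable fun y => (gaussianPDFReal 0 v y).toNNReal :=
      (measurable_gaussianPDFReal 0 v).real_toNNReal
    have hsmul : ∀ y : ℝ, (gaussianPDFReal 0 v y).toNNReal • Real.exp (c * y)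
        = Real.exp (c ^ 2 * v / 2) * gaussianPDFReal (c * v) v y := by
      intro y
      rw [NNReal.smul_def, Real.coe_toNNReal _ (gaussianPDFReal_nonneg 0 v y), smul_eq_mul,
        gaussianPDFReal_mul_exp c hv]
    have hint : Integrable (fun y => Real.exp (c ^ 2 * v / 2) * gaussianPDFReal (c * v) v y)
        volume := (integrable_gaussianPDFReal (c * v) v).const_mul _
    constructor
    · rw [hdens, integrable_withDensity_iff_integrable_smul hmeasd]
      exact hint.congr (Filter.Eventually.of_forall fun y => (hsmul y).symm)
    · rw [hdens, integral_withDensity_eq_integral_smul hmeasd]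
      simp_rw [hsmul]
      rw [integral_const_mul, integral_gaussianPDFReal_eq_one (c * v) hv, mul_one]

lemma indepFun_of_measurable' {Ω : Type*} {mΩ : MeasurableSpace Ω} {μ : Measure Ω}
    [IsProbabilityMeasure μ] {m1 m2 : MeasurableSpace Ω} (h : Indep m1 m2 μ)
    {f g : Ω → ℝ} (hf : Measurable[m1] f) (hg : Measurable[m2] g) :
    IndepFun f g μ := by
  rw [IndepFun_iff]
  rw [Indep_iff] at h
  rintro t1 t2 ⟨s1, hs1, rfl⟩ ⟨s2, hs2, rfl⟩
  exact h _ _ (hf hs1) (hg hs2)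

/-- **The value process of a constant proportional investment-consumption strategy.** Let
`B` be a standard `(𝓕_t)`-Brownian motion,
`X_t = x exp(πσ B_t + (r + π(μ-r) - ξ - π²σ²/2)t)`, `C = ξX`, and suppose
`H(π,ξ) = δθ + (R-1)(r + λσπ - ξ - π²σ²R/2) > 0`. Then
`V_t = e^{-δθt}(bθξ^{1-S}/H)^θ X_t^{1-R}/(1-R)` satisfies
`E[∫₀^∞ |b e^{-δs}(C_s^{1-S}/(1-S))((1-R)V_s)^ρ| ds] < ∞` and
`V_t = E[∫_t^∞ b e^{-δs}(C_s^{1-S}/(1-S))((1-R)V_s)^ρ ds | 𝓕_t]` a.s. for every `t ≥ 0`;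
that is, `V` is a utility process for the Epstein–Zin aggregator and `C`. -/
theorem constant_proportions_value_process
    {Ω : Type*} {m : MeasurableSpace Ω} (P : Measure Ω) [IsProbabilityMeasure P]
    (ℱ : MeasureTheory.Filtration ℝ m)
    (B : ℝ → Ω → ℝ)
    (hB0 : ∀ ω, B 0 ω = 0)
    (hBcont : ∀ ω, Continuous fun t => B t ω)
    (hBadapted : Adapted ℱ B)
    (hBlaw : ∀ t s : ℝ, 0 ≤ t → t ≤ s →
      P.map (fun ω => B s ω - B t ω) = gaussianReal 0 ((s - t).toNNReal))
    (hBindep : ∀ t s : ℝ, 0 ≤ t → t ≤ s →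
      ProbabilityTheory.Indep
        (MeasurableSpace.comap (fun ω => B s ω - B t ω) inferInstance) (ℱ t) P)
    (b δ R S θ ρ : ℝ) (hb : 0 < b)
    (hR0 : 0 < R) (hR1 : R ≠ 1) (hS0 : 0 < S) (hS1 : S ≠ 1) (hRS : R ≠ S)
    (hθ : θ = (1 - R) / (1 - S)) (hθpos : 0 < θ)
    (hρ : ρ = (S - R) / (1 - R))
    (r μv σ lam p ξ x : ℝ) (hσ : 0 < σ) (hξ : 0 < ξ) (hx : 0 < x)
    (hlam : lam = (μv - r) / σ)
    (H : ℝ) (hH : H = δ * θ + (R - 1) * (r + lam * σ * p - ξ - p ^ 2 * σ ^ 2 * R / 2))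
    (hHpos : 0 < H)
    (X : ℝ → Ω → ℝ)
    (hX : ∀ t ω, X t ω =
      x * Real.exp (p * σ * B t ω + (r + p * (μv - r) - ξ - p ^ 2 * σ ^ 2 / 2) * t))
    (C : ℝ → Ω → ℝ) (hC : ∀ t ω, C t ω = ξ * X t ω)
    (V : ℝ → Ω → ℝ)
    (hV : ∀ t ω, V t ω =
      Real.exp (-(δ * θ) * t) * (b * θ * ξ ^ (1 - S) / H) ^ θ * X t ω ^ (1 - R) / (1 - R)) :
    (∫⁻ ω, (∫⁻ s in Set.Ioi (0:ℝ), ENNReal.ofReal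
        |b * Real.exp (-δ * s) * (C s ω ^ (1 - S) / (1 - S)) * ((1 - R) * V s ω) ^ ρ|) ∂P) < ⊤ ∧
    ∀ t : ℝ, 0 ≤ t →
      V t =ᵐ[P] P[(fun ω => ∫ s in Set.Ioi t,
        b * Real.exp (-δ * s) * (C s ω ^ (1 - S) / (1 - S)) * ((1 - R) * V s ω) ^ ρ) | ℱ t] := by
  have h1R : (1 : ℝ) - R ≠ 0 := sub_ne_zero.mpr (Ne.symm hR1)
  have h1S : (1 : ℝ) - S ≠ 0 := sub_ne_zero.mpr (Ne.symm hS1)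
  have hθ1S : θ * (1 - S) = 1 - R := by rw [hθ]; field_simp
  have hρ1R : ρ * (1 - R) = S - R := by rw [hρ]; field_simp
  have hθρ : θ * ρ = θ - 1 := by rw [hθ, hρ]; field_simp; ring
  set a : ℝ := (1 - R) * (p * σ) with ha
  set c0 : ℝ := r + p * (μv - r) - ξ - p ^ 2 * σ ^ 2 / 2 with hc0
  set e : ℝ := (1 - R) * c0 - δ * θ with he
  set base : ℝ := b * θ * ξ ^ (1 - S) / H with hbase
  have hbasepos : 0 < base := by
    rw [hbase]
    exact div_pos (by positivity) hHpos
  set K : ℝ := base ^ θ with hK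
  have hKpos : 0 < K := Real.rpow_pos_of_pos hbasepos θ
  set D : ℝ := K * x ^ (1 - R) / (1 - R) with hD
  have hHe : e + a ^ 2 / 2 = -H := by
    rw [he, ha, hc0, hH, hlam]
    field_simp
    ring
  -- closed form for V
  have hVform : ∀ s ω, V s ω = D * Real.exp (a * B s ω + e * s) := by
    intro s ω
    rw [hV, hX, Real.mul_rpow hx.le (Real.exp_nonneg _), ← Real.exp_mul, hD]
    have hexp : Real.exp (-(δ * θ) * s) * Real.exp ((p * σ * B s ω + c0 * s) * (1 - R))
        = Real.exp (a * B s ω + e * s) := by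
      rw [← Real.exp_add]; congr 1; rw [ha, he]; ring
    rw [← hexp]
    ring
  -- key algebraic identity
  have hkey : ∀ s ω, b * Real.exp (-δ * s) * (C s ω ^ (1 - S) / (1 - S)) *
      ((1 - R) * V s ω) ^ ρ = H * D * Real.exp (a * B s ω + e * s) := by
    intro s ω
    have h1 : (1 - R) * V s ω = (K * x ^ (1 - R)) * Real.exp (a * B s ω + e * s) := by
      rw [hVform s ω, hD]
      field_simp
    rw [h1, hC, hX]
    rw [show ξ * (x * Real.exp (p * σ * B s ω + c0 * s))
        = ξ * x * Real.exp (p * σ * B s ω + c0 * s) by ring,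
      Real.mul_rpow (by positivity) (Real.exp_nonneg _),
      Real.mul_rpow hξ.le hx.le, ← Real.exp_mul]
    rw [Real.mul_rpow (by positivity) (Real.exp_nonneg _), ← Real.exp_mul,
      Real.mul_rpow hKpos.le (Real.rpow_nonneg hx.le _)]
    have hKρ : K ^ ρ = K / base := by
      rw [hK, ← Real.rpow_mul hbasepos.le, hθρ, Real.rpow_sub hbasepos, Real.rpow_one]
    have hxρ : (x ^ (1 - R)) ^ ρ = x ^ (1 - R) / x ^ (1 - S) := by
      rw [← Real.rpow_mul hx.le, show (1 - R) * ρ = (1 - R) - (1 - S) by linear_combination hρ1R,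
        Real.rpow_sub hx]
    rw [hKρ, hxρ]
    have hexps : Real.exp (-δ * s) * Real.exp ((p * σ * B s ω + c0 * s) * (1 - S)) *
        Real.exp ((a * B s ω + e * s) * ρ) = Real.exp (a * B s ω + e * s) := by
      rw [← Real.exp_add, ← Real.exp_add]
      congr 1
      rw [ha, he]
      linear_combination (B s ω * (p * σ) + c0 * s) * hρ1R - (δ * s) * hθρ
    have hq : (0:ℝ) < ξ ^ (1 - S) := Real.rpow_pos_of_pos hξ _
    have hx1 : (0:ℝ) < x ^ (1 - S) := Real.rpow_pos_of_pos hx _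
    have hconst : b * (ξ ^ (1 - S) * x ^ (1 - S)) / (1 - S) *
        (K / base * (x ^ (1 - R) / x ^ (1 - S))) = H * D := by
      rw [hD, hbase]
      field_simp
      linear_combination (-1:ℝ) * hθ1S
    linear_combination (Real.exp (-δ * s) * Real.exp ((p * σ * B s ω + c0 * s) * (1 - S)) *
      Real.exp ((a * B s ω + e * s) * ρ)) * hconst + (H * D) * hexps
  -- measurability infrastructure
  have hBmeas : ∀ s : ℝ, Measurable (B s) :=
    fun s => (hBadapted s).mono (ℱ.le s) le_rfl
  have hBj : StronglyMeasurable (Function.uncurry B) :=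
    stronglyMeasurable_uncurry_of_continuous_of_stronglyMeasurable hBcont
      fun t => (hBmeas t).stronglyMeasurable
  have hexpmeas : ∀ c : ℝ, Measurable fun y : ℝ => Real.exp (c * y) :=
    fun c => Real.measurable_exp.comp (measurable_const.mul measurable_id)
  -- exponential moments
  have hEexp : ∀ s : ℝ, 0 ≤ s →
      Integrable (fun ω => Real.exp (a * B s ω)) P ∧
      ∫ ω, Real.exp (a * B s ω) ∂P = Real.exp (a ^ 2 * s / 2) := by
    intro s hs
    have hmap : P.map (B s) = gaussianReal 0 s.toNNReal := by
      have h := hBlaw 0 s le_rfl hs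
      simpa [hB0] using h
    have hg := exp_moment_gaussianReal a s.toNNReal
    have hgm : AEStronglyMeasurable (fun y : ℝ => Real.exp (a * y)) (P.map (B s)) :=
      (hexpmeas a).aestronglyMeasurable
    constructor
    · exact (integrable_map_measure hgm (hBmeas s).aemeasurable).mp (by rw [hmap]; exact hg.1)
    · have h2 := integral_map (hBmeas s).aemeasurable hgm
      rw [hmap, hg.2] at h2
      rw [← h2, Real.coe_toNNReal s hs]
  have hEW : ∀ t s : ℝ, 0 ≤ t → t ≤ s →
      Integrable (fun ω => Real.exp (a * (B s ω - B t ω))) P ∧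
      ∫ ω, Real.exp (a * (B s ω - B t ω)) ∂P = Real.exp (a ^ 2 * (s - t) / 2) := by
    intro t s ht hts
    have hWm : Measurable fun ω => B s ω - B t ω := (hBmeas s).sub (hBmeas t)
    have hmap := hBlaw t s ht hts
    have hg := exp_moment_gaussianReal a (s - t).toNNReal
    have hgm : AEStronglyMeasurable (fun y : ℝ => Real.exp (a * y))
        (P.map fun ω => B s ω - B t ω) := (hexpmeas a).aestronglyMeasurable
    constructor
    · exact (integrable_map_measure hgm hWm.aemeasurable).mp (by rw [hmap]; exact hg.1)
    · have h2 := integral_map hWm.aemeasurable hgm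
      rw [hmap, hg.2] at h2
      rw [← h2, Real.coe_toNNReal _ (sub_nonneg.mpr hts)]
  -- set integrals via independence
  have hsetint : ∀ t s : ℝ, 0 ≤ t → t ≤ s → ∀ A : Set Ω, MeasurableSet[ℱ t] A →
      ∫ ω in A, Real.exp (a * B s ω) ∂P
        = Real.exp (a ^ 2 * (s - t) / 2) * ∫ ω in A, Real.exp (a * B t ω) ∂P := by
    intro t s ht hts A hA
    have hAm : MeasurableSet A := ℱ.le t A hA
    have hind : IndepFun (fun ω => Real.exp (a * (B s ω - B t ω)))
        (A.indicator fun ω' => Real.exp (a * B t ω')) P := by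
      refine indepFun_of_measurable' (hBindep t s ht hts) ?_ ?_
      · exact Real.measurable_exp.comp
          ((measurable_iff_comap_le.mpr le_rfl).const_mul a)
      · exact (Real.measurable_exp.comp
          ((hBadapted t).const_mul a)).indicator hA
    have hI1 := (hEW t s ht hts).1
    have hI2 : Integrable (A.indicator fun ω' => Real.exp (a * B t ω')) P :=
      ((hEexp t ht).1).indicator hAm
    have heqf : A.indicator (fun ω => Real.exp (a * B s ω))
        = fun ω => Real.exp (a * (B s ω - B t ω)) *
            (A.indicator fun ω' => Real.exp (a * B t ω')) ω := by
      funext ω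
      by_cases hω : ω ∈ A
      · simp only [Set.indicator_of_mem hω]
        rw [← Real.exp_add]
        congr 1
        ring
      · simp [Set.indicator_of_notMem hω]
    have hmul := ProbabilityTheory.IndepFun.integral_fun_mul_eq_mul_integral hind
      hI1.aestronglyMeasurable hI2.aestronglyMeasurable
    calc ∫ ω in A, Real.exp (a * B s ω) ∂P
        = ∫ ω, A.indicator (fun ω => Real.exp (a * B s ω)) ω ∂P :=
          (integral_indicator hAm).symm
      _ = ∫ ω, Real.exp (a * (B s ω - B t ω)) *
            (A.indicator fun ω' => Real.exp (a * B t ω')) ω ∂P := by rw [heqf]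
      _ = (∫ ω, Real.exp (a * (B s ω - B t ω)) ∂P) *
            ∫ ω, (A.indicator fun ω' => Real.exp (a * B t ω')) ω ∂P := hmul
      _ = Real.exp (a ^ 2 * (s - t) / 2) * ∫ ω in A, Real.exp (a * B t ω) ∂P := by
          rw [(hEW t s ht hts).2, integral_indicator hAm]
  -- joint measurability of the integrand
  have hgmeas : Measurable fun q : ℝ × Ω => H * D * Real.exp (a * B q.1 q.2 + e * q.1) := by
    have hb' : Measurable fun q : ℝ × Ω => B q.1 q.2 := hBj.measurable
    exact (Real.measurable_exp.comp
      ((hb'.const_mul a).add (measurable_fst.const_mul e))).const_mul _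
  -- product integrability
  have hprod : ∀ t : ℝ, 0 ≤ t →
      Integrable (fun q : ℝ × Ω => H * D * Real.exp (a * B q.1 q.2 + e * q.1))
        ((volume.restrict (Ioi t)).prod P) := by
    intro t ht
    refine (integrable_prod_iff hgmeas.aestronglyMeasurable).mpr ⟨?_, ?_⟩
    · filter_upwards [ae_restrict_mem measurableSet_Ioi] with s hs
      have := ((hEexp s (ht.trans hs.le)).1).const_mul (H * D * Real.exp (e * s))
      refine this.congr (Filter.Eventually.of_forall fun ω => ?_)
      show (H * D * Real.exp (e * s)) * Real.exp (a * B s ω)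
        = H * D * Real.exp (a * B s ω + e * s)
      rw [Real.exp_add]
      ring
    · have hnorm : ∀ᵐ s ∂(volume.restrict (Ioi t)),
          (|H * D| * Real.exp (-H * s))
            = ∫ ω, ‖H * D * Real.exp (a * B s ω + e * s)‖ ∂P := by
        filter_upwards [ae_restrict_mem measurableSet_Ioi] with s hs
        have h0s : (0:ℝ) ≤ s := ht.trans hs.le
        have hform : (fun ω => ‖H * D * Real.exp (a * B s ω + e * s)‖)
            = fun ω => (|H * D| * Real.exp (e * s)) * Real.exp (a * B s ω) := by
          funext ω
          rw [Real.norm_eq_abs, abs_mul, abs_of_pos (Real.exp_pos _), Real.exp_add]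
          ring
        rw [hform, integral_const_mul, (hEexp s h0s).2, mul_assoc, ← Real.exp_add]
        congr 1
        rw [Real.exp_eq_exp]
        linear_combination (-s) * hHe
      have hgint : Integrable (fun s : ℝ => |H * D| * Real.exp (-H * s))
          (volume.restrict (Ioi t)) := (exp_neg_integrableOn_Ioi t hHpos).const_mul _
      exact hgint.congr hnorm
  constructor
  · -- finiteness
    simp only [hkey]
    have hswap : (∫⁻ ω, (∫⁻ s in Set.Ioi (0:ℝ), ENNReal.ofReal
          |H * D * Real.exp (a * B s ω + e * s)|) ∂P)
        = ∫⁻ s in Set.Ioi (0:ℝ), (∫⁻ ω, ENNReal.ofReal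
          |H * D * Real.exp (a * B s ω + e * s)| ∂P) := by
      refine lintegral_lintegral_swap ?_
      apply Measurable.aemeasurable
      exact ((hgmeas.comp measurable_swap).abs).ennreal_ofReal
    rw [hswap]
    have hin : ∀ s ∈ Ioi (0:ℝ),
        (∫⁻ ω, ENNReal.ofReal |H * D * Real.exp (a * B s ω + e * s)| ∂P)
          = ENNReal.ofReal (|H * D| * Real.exp (-H * s)) := by
      intro s hs
      have hform : (fun ω => ENNReal.ofReal |H * D * Real.exp (a * B s ω + e * s)|)
          = fun ω => ENNReal.ofReal ((|H * D| * Real.exp (e * s)) * Real.exp (a * B s ω)) := by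
        funext ω
        congr 1
        rw [abs_mul, abs_of_pos (Real.exp_pos _), Real.exp_add]
        ring
      rw [hform, ← ofReal_integral_eq_lintegral_ofReal
        (((hEexp s (le_of_lt hs)).1).const_mul _)
        (Filter.Eventually.of_forall fun ω => by positivity),
        integral_const_mul, (hEexp s (le_of_lt hs)).2]
      congr 1
      rw [mul_assoc, ← Real.exp_add]
      congr 1
      rw [Real.exp_eq_exp]
      linear_combination s * hHe
    rw [setLIntegral_congr_fun measurableSet_Ioi hin]
    rw [← ofReal_integral_eq_lintegral_ofReal
      ((exp_neg_integrableOn_Ioi 0 hHpos).const_mul _)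
      (Filter.Eventually.of_forall fun s => by positivity)]
    exact ENNReal.ofReal_lt_top
  · -- the conditional expectation identity
    intro t ht
    simp only [hkey]
    have hVt : V t = fun ω => (D * Real.exp (e * t)) * Real.exp (a * B t ω) := by
      funext ω
      rw [hVform t ω, Real.exp_add]
      ring
    have hVint : Integrable (V t) P := by
      rw [hVt]
      exact ((hEexp t ht).1).const_mul _
    have hGint : Integrable (fun ω => ∫ s in Set.Ioi t,
        H * D * Real.exp (a * B s ω + e * s)) P := by
      simpa using (hprod t ht).integral_prod_right
    have hmeas' : AEStronglyMeasurable[ℱ t] (V t) P := by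
      refine StronglyMeasurable.aestronglyMeasurable ?_
      rw [hVt]
      exact Measurable.stronglyMeasurable
        ((Real.measurable_exp.comp ((hBadapted t).const_mul a)).const_mul _)
    -- ∫_{Ioi t} H e^{-H(s-t)} ds = 1
    have hexpint : (∫ s in Set.Ioi t, H * Real.exp (-H * (s - t))) = 1 := by
      have hderiv : ∀ u ∈ Ioi t, HasDerivAt (fun u : ℝ => -Real.exp (-H * (u - t)))
          (H * Real.exp (-H * (u - t))) u := by
        intro u _
        have h1 : HasDerivAt (fun u : ℝ => -H * (u - t)) (-H) u := by
          simpa using ((hasDerivAt_id u).sub_const t).const_mul (-H)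
        have h3 : HasDerivAt (fun u : ℝ => -Real.exp (-H * (u - t))) _ u := (h1.exp).neg
        convert h3 using 1
        ring
      have hfint : IntegrableOn (fun u : ℝ => H * Real.exp (-H * (u - t))) (Ioi t) := by
        have hfr : (fun u : ℝ => H * Real.exp (-H * (u - t)))
            = fun u : ℝ => (H * Real.exp (H * t)) * Real.exp (-H * u) := by
          funext u
          rw [mul_assoc, ← Real.exp_add]
          congr 2
          ring
        rw [hfr]
        exact (exp_neg_integrableOn_Ioi t hHpos).const_mul _
      have htend : Filter.Tendsto (fun u : ℝ => -Real.exp (-H * (u - t)))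
          Filter.atTop (nhds 0) := by
        rw [show (0:ℝ) = -0 by ring]
        refine Filter.Tendsto.neg ?_
        refine Real.tendsto_exp_atBot.comp ?_
        refine Filter.Tendsto.const_mul_atTop_of_neg (neg_lt_zero.mpr hHpos) ?_
        exact Filter.tendsto_atTop_add_const_right _ (-t) Filter.tendsto_id
      have hcont : ContinuousWithinAt (fun u : ℝ => -Real.exp (-H * (u - t))) (Ici t) t := by
        exact ((Real.continuous_exp.comp
          (continuous_const.mul ((continuous_id.sub continuous_const)))).neg).continuousWithinAt
      have hres := integral_Ioi_of_hasDerivAt_of_tendsto hcont hderiv hfint htend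
      rw [hres]
      simp
    -- apply the characterization of condexp
    refine ae_eq_condExp_of_forall_setIntegral_eq (ℱ.le t) hGint
      (fun A hA _ => hVint.integrableOn) ?_ hmeas'
    intro A hA _
    have hAm : MeasurableSet A := ℱ.le t A hA
    -- Fubini on A × Ioi t
    have hint2 : Integrable (fun q : Ω × ℝ => H * D * Real.exp (a * B q.2 q.1 + e * q.2))
        ((P.restrict A).prod (volume.restrict (Ioi t))) := by
      have h1 := (hprod t ht).swap
      have h2 : (P.restrict A).prod (volume.restrict (Ioi t))
          = (P.prod (volume.restrict (Ioi t))).restrict (A ×ˢ univ) :=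
        Measure.restrict_prod_eq_prod_univ A
      rw [h2]
      exact h1.restrict
    have hswap2 : (∫ ω in A, (∫ s in Set.Ioi t, H * D * Real.exp (a * B s ω + e * s)) ∂P)
        = ∫ s in Set.Ioi t, (∫ ω in A, H * D * Real.exp (a * B s ω + e * s) ∂P) := by
      exact integral_integral_swap hint2
    rw [hswap2]
    have hin2 : ∀ s ∈ Ioi t, (∫ ω in A, H * D * Real.exp (a * B s ω + e * s) ∂P)
        = (H * Real.exp (-H * (s - t))) * ∫ ω in A, V t ω ∂P := by
      intro s hs
      have hform : (fun ω => H * D * Real.exp (a * B s ω + e * s))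
          = fun ω => (H * D * Real.exp (e * s)) * Real.exp (a * B s ω) := by
        funext ω
        rw [Real.exp_add]
        ring
      rw [hform, integral_const_mul, hsetint t s ht (le_of_lt hs) A hA]
      have hVA : (∫ ω in A, V t ω ∂P)
          = (D * Real.exp (e * t)) * ∫ ω in A, Real.exp (a * B t ω) ∂P := by
        rw [hVt, integral_const_mul]
      rw [hVA]
      have hxx : Real.exp (e * s) * Real.exp (a ^ 2 * (s - t) / 2)
          = Real.exp (-H * (s - t)) * Real.exp (e * t) := by
        rw [← Real.exp_add, ← Real.exp_add]
        congr 1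
        linear_combination (s - t) * hHe
      linear_combination (H * D * (∫ ω in A, Real.exp (a * B t ω) ∂P)) * hxx
    rw [setIntegral_congr_fun measurableSet_Ioi hin2, integral_mul_const, hexpint, one_mul]
end
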